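/- arXiv:1611.10056 — 6 statements merged into one kernel-verified Lean document; each statement's English description precedes it below -/
import Mathlib

section
/- Fix real numbers ℓ ≥ 1, b > 0 and x₀ > 0, set R = b·exp(−1/x₀^ℓ), and let f₀(x) = b·exp(−1/|x|^ℓ) for real x ≠ 0. Then there exist an open set U ⊆ D_*((−x₀,0)) ∪ D_*((0,x₀)) with (−x₀,0) ∪ (0,x₀) ⊆ U and a holomorphic map F₀ : U → ℂ such that F₀ agrees with f₀ on (−x₀,0) ∪ (0,x₀) and F₀ is an (unbranched) covering map from U onto B*(0,R). In particular diam(U) = 2x₀. -/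
/-!
Let `c = x₀^(-ℓ)`. On the petal `P = {z : |arg z| < π/(2ℓ), c < Re z^(-ℓ)}` the power
`z ↦ z^(-ℓ)` is a homeomorphism onto the half-plane `{c < Re w}`, with inverse `w ↦ w^(-1/ℓ)`,
and `w ↦ b e^(-w)` covers `B*(0, b e^(-c))` by that half-plane, being the restriction of the
covering `exp` to a preimage. Take `U = P ∪ -P` and for `F₀` the even extension of
`b exp(-z^(-ℓ))`: then `U ≃ₜ {c < Re w} × Bool`, and through it `F₀` is `b e^(-w)` composed
with the first projection, again a covering.

The inequality `cos (ℓθ) ≤ (cos θ)^ℓ` puts `P` inside the disk with diameter `(0, x₀)`, and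
`U` contains `(-x₀, 0) ∪ (0, x₀)`, so `diam U = 2x₀`.
-/

open Complex Set Metric Topology
open scoped Real

theorem Real.cos_mul_le_cos_rpow {ℓ θ : ℝ} (hℓ : 1 ≤ ℓ) (hθ : |ℓ * θ| ≤ π / 2) :
    Real.cos (ℓ * θ) ≤ Real.cos θ ^ ℓ := by
  have hℓ0 : 0 < ℓ := by linarith
  obtain ⟨hθ₁, hθ₂⟩ := abs_le.1 hθ
  have hcos : 0 ≤ Real.cos (ℓ * θ) := Real.cos_nonneg_of_mem_Icc ⟨hθ₁, hθ₂⟩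
  have hw : 0 ≤ 1 - ℓ⁻¹ := sub_nonneg.2 (inv_le_one_of_one_le₀ hℓ)
  -- concavity of `cos` followed by weighted AM-GM, with weights `ℓ⁻¹` and `1 - ℓ⁻¹`
  have hconc := strictConcaveOn_cos_Icc.concaveOn.2 (x := ℓ * θ) (y := 0) ⟨hθ₁, hθ₂⟩
    ⟨by linarith [Real.pi_pos], by linarith [Real.pi_pos]⟩ (inv_nonneg.2 hℓ0.le) hw (by ring)
  have hgm := Real.geom_mean_le_arith_mean2_weighted (inv_nonneg.2 hℓ0.le) hw hcos zero_le_one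
    (by ring)
  simp only [smul_eq_mul, Real.cos_zero, mul_zero, add_zero, Real.one_rpow, mul_one,
    inv_mul_cancel_left₀ hℓ0.ne'] at hconc hgm
  calc Real.cos (ℓ * θ) = (Real.cos (ℓ * θ) ^ ℓ⁻¹) ^ ℓ := (Real.rpow_inv_rpow hcos hℓ0.ne').symm
    _ ≤ Real.cos θ ^ ℓ := by gcongr; linarith

theorem Complex.arg_cpow_ofReal {x : ℂ} {s : ℝ} (hx : x ≠ 0) (h : arg x * s ∈ Ioc (-π) π) :
    arg (x ^ (s : ℂ)) = arg x * s := by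
  rw [cpow_ofReal, ofReal_cos, ofReal_sin,
    arg_mul_cos_add_sin_mul_I (Real.rpow_pos_of_pos (norm_pos_iff.2 hx) _) h]

theorem Complex.cpow_ofReal_cpow_ofReal {x : ℂ} {s : ℝ} (t : ℝ) (h : arg x * s ∈ Ioc (-π) π) :
    (x ^ (s : ℂ)) ^ (t : ℂ) = x ^ ((s * t : ℝ) : ℂ) := by
  have him : (log x * s).im = arg x * s := by simp [log_im]
  rw [ofReal_mul, cpow_mul _ (him ▸ h.1) (him ▸ h.2)]

theorem Complex.mem_ball_ofReal_self_of_sq_norm_lt {z : ℂ} {a : ℝ} (ha : 0 ≤ a)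
    (h : ‖z‖ ^ 2 < 2 * a * z.re) : z ∈ ball (a : ℂ) a := by
  rw [mem_ball, dist_eq, ← sq_lt_sq₀ (norm_nonneg _) ha, Complex.sq_norm, normSq_apply]
  rw [Complex.sq_norm, normSq_apply] at h
  simp only [sub_re, sub_im, ofReal_re, ofReal_im]
  nlinarith

theorem IsEvenlyCovered.comp_fst {E X I : Type*} [TopologicalSpace E] [TopologicalSpace X]
    [TopologicalSpace I] {f : E → X} {x : X} (h : IsEvenlyCovered f x I) (D : Type*)
    [TopologicalSpace D] [DiscreteTopology D] :
    IsEvenlyCovered (f ∘ Prod.fst : E × D → X) x (I × D) := by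
  obtain ⟨_, U, hxU, hU, hfU, H, hH⟩ := h
  refine ⟨inferInstance, U, hxU, hU, hfU.preimage continuous_fst,
    ((Homeomorph.setCongr (by ext; simp)).trans (Homeomorph.Set.prod _ univ)).trans
      ((H.prodCongr (Homeomorph.Set.univ D)).trans (Homeomorph.prodAssoc _ _ _)), fun e ↦ ?_⟩
  exact hH ⟨(e : E × D).1, e.2⟩

theorem IsCoveringMap.comp_fst {E X : Type*} [TopologicalSpace E] [TopologicalSpace X]
    {f : E → X} (hf : IsCoveringMap f) (D : Type*) [TopologicalSpace D] [DiscreteTopology D] :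
    IsCoveringMap (f ∘ Prod.fst : E × D → X) :=
  fun x ↦ ((hf x).comp_fst D).to_isEvenlyCovered_preimage

theorem isCoveringMapOn_const_mul_exp_neg {b : ℂ} (hb : b ≠ 0) :
    IsCoveringMapOn (fun w : ℂ ↦ b * exp (-w)) {0}ᶜ := by
  have := (isCoveringMapOn_exp.comp_homeomorph (Homeomorph.neg ℂ)).homeomorph_comp
    (Homeomorph.mulLeft₀ b hb)
  convert this using 1 <;> ext y <;> simp [hb]

theorem norm_const_mul_exp_neg {b : ℝ} (hb : 0 < b) (w : ℂ) :
    ‖(b : ℂ) * exp (-w)‖ = b * Real.exp (-w.re) := by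
  rw [norm_mul, norm_exp, norm_real, Real.norm_of_nonneg hb.le, neg_re]

theorem preimage_const_mul_exp_neg_ball_diff {b : ℝ} (hb : 0 < b) (c : ℝ) :
    (fun w : ℂ ↦ b * exp (-w)) ⁻¹' (ball 0 (b * Real.exp (-c)) \ {0}) = {w | c < w.re} := by
  ext w
  simp only [mem_preimage, mem_sdiff, mem_ball_zero_iff, norm_const_mul_exp_neg hb,
    mul_lt_mul_iff_right₀ hb, Real.exp_lt_exp, neg_lt_neg_iff, mem_singleton_iff, mul_eq_zero,
    ofReal_eq_zero, hb.ne', exp_ne_zero, or_self, not_false_eq_true, and_true, mem_ofPred_eq]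

theorem mapsTo_const_mul_exp_neg {b : ℝ} (hb : 0 < b) (c : ℝ) :
    MapsTo (fun w : ℂ ↦ b * exp (-w)) {w | c < w.re} (ball 0 (b * Real.exp (-c)) \ {0}) :=
  (preimage_const_mul_exp_neg_ball_diff hb c).ge

theorem isCoveringMap_restrict_const_mul_exp_neg {b : ℝ} (hb : 0 < b) (c : ℝ) :
    IsCoveringMap (mapsTo_const_mul_exp_neg hb c).restrict :=
  (((isCoveringMapOn_const_mul_exp_neg (ofReal_ne_zero.2 hb.ne')).mono fun _ h ↦ h.2)
    |>.isCoveringMap_restrictPreimage).comp_homeomorph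
      (Homeomorph.setCongr (preimage_const_mul_exp_neg_ball_diff hb c).symm)

theorem surjOn_const_mul_exp_neg {b : ℝ} (hb : 0 < b) (c : ℝ) :
    SurjOn (fun w : ℂ ↦ b * exp (-w)) {w | c < w.re} (ball 0 (b * Real.exp (-c)) \ {0}) := by
  intro y hy
  have hb' : (b : ℂ) ≠ 0 := ofReal_ne_zero.2 hb.ne'
  have hw : (b : ℂ) * exp (-(-log (y / b))) = y := by
    rw [neg_neg, exp_log (div_ne_zero hy.2 hb'), mul_div_cancel₀ _ hb']
  refine ⟨-log (y / b), (preimage_const_mul_exp_neg_ball_diff hb c).subset ?_, hw⟩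
  rwa [mem_preimage, hw]

namespace FlatCovering

noncomputable def foldRight (z : ℂ) : ℂ := if 0 < z.re then z else -z

theorem re_foldRight_pos {z : ℂ} (hz : z.re ≠ 0) : 0 < (foldRight z).re := by
  unfold foldRight
  split_ifs with h
  · exact h
  · rw [neg_re]; exact neg_pos.2 (lt_of_le_of_ne (not_lt.1 h) hz)

theorem foldRight_mem {A : Set ℂ} (hA : ∀ z ∈ A, 0 < z.re) {z : ℂ} (hz : z ∈ A ∪ -A) :
    foldRight z ∈ A := by
  unfold foldRight
  split_ifs with h
  · exact hz.resolve_right fun h' ↦ by linarith [hA _ h', neg_re z]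
  · exact hz.resolve_left fun h' ↦ h (hA z h')

theorem re_ne_zero_of_mem_union_neg {A : Set ℂ} (hA : ∀ z ∈ A, 0 < z.re) {z : ℂ}
    (hz : z ∈ A ∪ -A) : z.re ≠ 0 := by
  rcases hz with h | h
  · exact (hA z h).ne'
  · have := hA _ h; rw [neg_re] at this; linarith

theorem foldRight_eventuallyEq_id {z : ℂ} (hz : 0 < z.re) : foldRight =ᶠ[𝓝 z] id := by
  filter_upwards [continuous_re.continuousAt.eventually (lt_mem_nhds hz)] with w hw
  exact if_pos hw

theorem foldRight_eventuallyEq_neg {z : ℂ} (hz : z.re < 0) : foldRight =ᶠ[𝓝 z] Neg.neg := by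
  filter_upwards [continuous_re.continuousAt.eventually (gt_mem_nhds hz)] with w hw
  exact if_neg hw.le.not_gt

theorem differentiableAt_foldRight {z : ℂ} (hz : z.re ≠ 0) : DifferentiableAt ℂ foldRight z := by
  rcases hz.lt_or_gt with h | h
  · exact differentiableAt_neg_iff.2 differentiableAt_id |>.congr_of_eventuallyEq
      (foldRight_eventuallyEq_neg h)
  · exact differentiableAt_id.congr_of_eventuallyEq (foldRight_eventuallyEq_id h)

noncomputable def unionNegHomeomorph {A : Set ℂ} (hA : ∀ z ∈ A, 0 < z.re) :
    ↥(A ∪ -A) ≃ₜ A × Bool where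
  toFun z := (⟨foldRight z, foldRight_mem hA z.2⟩, decide (0 < (z : ℂ).re))
  invFun p := ⟨cond p.2 p.1 (-p.1), by
    rcases p with ⟨a, _ | _⟩
    · exact Or.inr (by simp [a.2])
    · exact Or.inl a.2⟩
  left_inv z := by
    by_cases h : 0 < (z : ℂ).re <;> ext <;> simp [foldRight, h]
  right_inv := by
    rintro ⟨a, _ | _⟩ <;> have h := hA a a.2 <;> ext <;> simp [foldRight, h, h.not_gt]
  continuous_toFun := by
    refine continuous_iff_continuousAt.2 fun z ↦ ?_
    have hz := re_ne_zero_of_mem_union_neg hA z.2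
    refine ContinuousAt.prodMk ?_ ?_
    · exact ((differentiableAt_foldRight hz).continuousAt.comp
        continuous_subtype_val.continuousAt).codRestrict _
    · rcases hz.lt_or_gt with h | h
      · refine (continuousAt_const (y := false)).congr ?_
        filter_upwards [(continuous_re.comp continuous_subtype_val).continuousAt.eventually
          (gt_mem_nhds h)] with w hw
        exact (decide_eq_false hw.le.not_gt).symm
      · refine (continuousAt_const (y := true)).congr ?_
        filter_upwards [(continuous_re.comp continuous_subtype_val).continuousAt.eventually
          (lt_mem_nhds h)] with w hw
        exact (decide_eq_true hw).symm
  continuous_invFun := by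
    refine continuous_prod_of_discrete_right.2 fun s ↦ ?_
    cases s
    · exact continuous_subtype_val.neg.subtype_mk _
    · exact continuous_subtype_val.subtype_mk _

def rightPetal (ℓ c : ℝ) : Set ℂ :=
  {z | 0 < z.re ∧ |arg z| < π / (2 * ℓ) ∧ c < (z ^ ((-ℓ : ℝ) : ℂ)).re}

section rightPetal

variable {ℓ c : ℝ} {z w : ℂ}

theorem abs_arg_mul_lt_of_mem_rightPetal (hℓ : 0 < ℓ) (hz : z ∈ rightPetal ℓ c) :
    |arg z * ℓ| < π / 2 := by
  have := hz.2.1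
  rw [lt_div_iff₀ (by positivity)] at this
  rw [abs_mul, abs_of_pos hℓ]
  linarith

theorem cpow_neg_inv_mem_rightPetal (hℓ : 1 ≤ ℓ) (hc : 0 ≤ c) (hw : c < w.re) :
    w ^ ((-ℓ⁻¹ : ℝ) : ℂ) ∈ rightPetal ℓ c ∧ (w ^ ((-ℓ⁻¹ : ℝ) : ℂ)) ^ ((-ℓ : ℝ) : ℂ) = w := by
  have hℓ0 : 0 < ℓ := by linarith
  have hw0 : w ≠ 0 := by rintro rfl; simp at hw; linarith
  have harg : |arg w| < π / 2 := abs_arg_lt_pi_div_two_iff.2 (Or.inl (by linarith))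
  have hsmall : |arg w * -ℓ⁻¹| < π / (2 * ℓ) := by
    rw [abs_mul, abs_neg, abs_inv, abs_of_pos hℓ0, ← div_eq_mul_inv,
      div_lt_div_iff₀ hℓ0 (by positivity)]
    nlinarith [Real.pi_pos]
  have hle : π / (2 * ℓ) ≤ π / 2 := div_le_div_of_nonneg_left Real.pi_pos.le two_pos (by linarith)
  have hIoc : arg w * -ℓ⁻¹ ∈ Ioc (-π) π := by
    constructor <;> linarith [abs_lt.1 (hsmall.trans_le hle), Real.pi_pos]
  have hinv : (w ^ ((-ℓ⁻¹ : ℝ) : ℂ)) ^ ((-ℓ : ℝ) : ℂ) = w := by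
    rw [cpow_ofReal_cpow_ofReal _ hIoc, show -ℓ⁻¹ * -ℓ = 1 by field_simp, ofReal_one, cpow_one]
  have harg' : |arg (w ^ ((-ℓ⁻¹ : ℝ) : ℂ))| < π / (2 * ℓ) := by rwa [arg_cpow_ofReal hw0 hIoc]
  refine ⟨⟨?_, harg', by rwa [hinv]⟩, hinv⟩
  refine (abs_arg_lt_pi_div_two_iff.1 (harg'.trans_le hle)).resolve_right ?_
  exact (cpow_ne_zero_iff_of_exponent_ne_zero (by simp [hℓ0.ne'])).2 hw0

noncomputable def rightPetalHomeomorph (hℓ : 1 ≤ ℓ) (hc : 0 ≤ c) :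
    rightPetal ℓ c ≃ₜ {w : ℂ | c < w.re} where
  toFun z := ⟨(z : ℂ) ^ ((-ℓ : ℝ) : ℂ), z.2.2.2⟩
  invFun w := ⟨(w : ℂ) ^ ((-ℓ⁻¹ : ℝ) : ℂ), (cpow_neg_inv_mem_rightPetal hℓ hc w.2).1⟩
  left_inv z := by
    have hℓ0 : 0 < ℓ := by linarith
    have h := abs_lt.1 (abs_arg_mul_lt_of_mem_rightPetal hℓ0 z.2)
    have hIoc : arg z * -ℓ ∈ Ioc (-π) π := by constructor <;> nlinarith [Real.pi_pos]
    ext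
    simp only
    rw [cpow_ofReal_cpow_ofReal _ hIoc, show -ℓ * -ℓ⁻¹ = 1 by field_simp, ofReal_one, cpow_one]
  right_inv w := Subtype.ext (cpow_neg_inv_mem_rightPetal hℓ hc w.2).2
  continuous_toFun := by
    refine continuous_iff_continuousAt.2 fun z ↦ ?_
    exact ((continuousAt_cpow_const (Or.inl z.2.1)).comp
      continuous_subtype_val.continuousAt).codRestrict _
  continuous_invFun := by
    refine continuous_iff_continuousAt.2 fun w ↦ ?_
    exact ((continuousAt_cpow_const (Or.inl (hc.trans_lt w.2))).comp
      continuous_subtype_val.continuousAt).codRestrict _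

theorem isOpen_rightPetal (ℓ c : ℝ) : IsOpen (rightPetal ℓ c) := by
  refine isOpen_iff_mem_nhds.2 fun z hz ↦ ?_
  have hslit : z ∈ slitPlane := Or.inl hz.1
  filter_upwards [continuous_re.continuousAt.eventually (lt_mem_nhds hz.1),
    (continuousAt_arg hslit).abs.eventually (gt_mem_nhds hz.2.1),
    (continuous_re.continuousAt.comp (continuousAt_cpow_const hslit)).eventually
      (lt_mem_nhds hz.2.2)] with w hw₁ hw₂ hw₃
  exact ⟨hw₁, hw₂, hw₃⟩

theorem ofReal_mem_rightPetal (hℓ : 0 < ℓ) {x₀ x : ℝ} (hx : x ∈ Ioo 0 x₀) :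
    (x : ℂ) ∈ rightPetal ℓ (x₀ ^ (-ℓ)) := by
  refine ⟨by simpa using hx.1, by simpa [arg_ofReal_of_nonneg hx.1.le] using by positivity, ?_⟩
  rw [← ofReal_cpow hx.1.le, ofReal_re]
  exact Real.rpow_lt_rpow_of_neg hx.1 hx.2 (by linarith)

theorem rightPetal_subset_ball (hℓ : 1 ≤ ℓ) {x₀ : ℝ} (hx₀ : 0 < x₀) :
    rightPetal ℓ (x₀ ^ (-ℓ)) ⊆ ball ((x₀ / 2 : ℝ) : ℂ) (x₀ / 2) := by
  intro z hz
  have hℓ0 : 0 < ℓ := by linarith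
  have hr : 0 < ‖z‖ := norm_pos_iff.2 fun h ↦ by simpa [h] using hz.1
  have hcos : 0 ≤ Real.cos (arg z) :=
    Real.cos_nonneg_of_mem_Icc (abs_le.1 (abs_arg_lt_pi_div_two_iff.2 (Or.inl hz.1)).le)
  have h1 : x₀ ^ (-ℓ) < ‖z‖ ^ (-ℓ) * Real.cos (ℓ * arg z) := by
    have := hz.2.2
    rwa [cpow_ofReal_re, mul_neg, Real.cos_neg, mul_comm (arg z)] at this
  have h2 : Real.cos (ℓ * arg z) ≤ Real.cos (arg z) ^ ℓ :=
    Real.cos_mul_le_cos_rpow hℓ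
      (by rw [mul_comm]; exact (abs_arg_mul_lt_of_mem_rightPetal hℓ0 hz).le)
  have h3 : x₀⁻¹ ^ ℓ < (Real.cos (arg z) / ‖z‖) ^ ℓ := by
    rw [Real.div_rpow hcos hr.le, Real.inv_rpow hx₀.le, ← Real.rpow_neg hx₀.le, div_eq_mul_inv,
      mul_comm, ← Real.rpow_neg hr.le]
    exact h1.trans_le (mul_le_mul_of_nonneg_left h2 (by positivity))
  have h4 : ‖z‖ < x₀ * Real.cos (arg z) := by
    have := (Real.rpow_lt_rpow_iff (by positivity) (by positivity) hℓ0).1 h3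
    rw [inv_lt_iff_one_lt_mul₀ hx₀, div_mul_eq_mul_div, one_lt_div hr] at this
    linarith
  refine mem_ball_ofReal_self_of_sq_norm_lt (by positivity) ?_
  rw [← norm_mul_cos_arg z]
  nlinarith

end rightPetal

def petals (ℓ c : ℝ) : Set ℂ := rightPetal ℓ c ∪ -rightPetal ℓ c

theorem isOpen_petals (ℓ c : ℝ) : IsOpen (petals ℓ c) :=
  (isOpen_rightPetal ℓ c).union (isOpen_rightPetal ℓ c).neg

noncomputable def petalsHomeomorph {ℓ c : ℝ} (hℓ : 1 ≤ ℓ) (hc : 0 ≤ c) :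
    petals ℓ c ≃ₜ {w : ℂ | c < w.re} × Bool :=
  (unionNegHomeomorph fun _ hz ↦ hz.1).trans
    ((rightPetalHomeomorph hℓ hc).prodCongr (Homeomorph.refl Bool))

theorem petals_subset_ball_union {ℓ x₀ : ℝ} (hℓ : 1 ≤ ℓ) (hx₀ : 0 < x₀) :
    petals ℓ (x₀ ^ (-ℓ)) ⊆
      ball ((-(x₀ / 2) : ℝ) : ℂ) (x₀ / 2) ∪ ball ((x₀ / 2 : ℝ) : ℂ) (x₀ / 2) := by
  rintro z (hz | hz)
  · exact Or.inr (rightPetal_subset_ball hℓ hx₀ hz)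
  · refine Or.inl ?_
    rw [mem_ball, ← dist_neg_neg, ofReal_neg, neg_neg]
    exact rightPetal_subset_ball hℓ hx₀ hz

theorem ofReal_mem_petals {ℓ x₀ x : ℝ} (hℓ : 0 < ℓ) (hx : x ∈ Ioo (-x₀) 0 ∪ Ioo 0 x₀) :
    (x : ℂ) ∈ petals ℓ (x₀ ^ (-ℓ)) := by
  rcases hx with hx | hx
  · refine Or.inr ?_
    rw [mem_neg, ← ofReal_neg]
    exact ofReal_mem_rightPetal hℓ ⟨neg_pos.2 hx.2, neg_lt.1 hx.1⟩
  · exact Or.inl (ofReal_mem_rightPetal hℓ hx)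

theorem diam_petals {ℓ x₀ : ℝ} (hℓ : 1 ≤ ℓ) (hx₀ : 0 < x₀) :
    diam (petals ℓ (x₀ ^ (-ℓ))) = 2 * x₀ := by
  have hsub : petals ℓ (x₀ ^ (-ℓ)) ⊆ ball 0 x₀ := by
    refine (petals_subset_ball_union hℓ hx₀).trans (union_subset ?_ ?_) <;>
      refine ball_subset_ball' (le_of_eq ?_) <;> simp [abs_of_pos hx₀]
  have hbdd : Bornology.IsBounded (petals ℓ (x₀ ^ (-ℓ))) := isBounded_ball.subset hsub
  refine le_antisymm ((diam_mono hsub isBounded_ball).trans (diam_ball hx₀.le)) ?_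
  refine le_of_forall_lt_imp_le_of_dense fun a ha ↦ ?_
  rcases le_or_gt a 0 with ha₀ | ha₀
  · exact ha₀.trans diam_nonneg
  have hx : a / 2 ∈ Ioo 0 x₀ := ⟨by positivity, by linarith⟩
  calc a = dist ((a / 2 : ℝ) : ℂ) ((-(a / 2) : ℝ) : ℂ) := by
        rw [dist_of_im_eq (by simp), ofReal_re, ofReal_re, Real.dist_eq, sub_neg_eq_add,
          add_halves, abs_of_pos ha₀]
    _ ≤ _ := dist_le_diam_of_mem hbdd (ofReal_mem_petals (by linarith) (Or.inr hx))
        (ofReal_mem_petals (by linarith) (Or.inl ⟨by linarith [hx.2], by linarith [hx.1]⟩))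

noncomputable def flatExt (ℓ b : ℝ) (z : ℂ) : ℂ := b * exp (-foldRight z ^ ((-ℓ : ℝ) : ℂ))

theorem differentiableAt_flatExt (ℓ b : ℝ) {z : ℂ} (hz : z.re ≠ 0) :
    DifferentiableAt ℂ (flatExt ℓ b) z :=
  ((differentiableAt_foldRight hz).cpow_const (Or.inl (re_foldRight_pos hz))).neg.cexp.const_mul _

theorem differentiableOn_flatExt (ℓ b c : ℝ) : DifferentiableOn ℂ (flatExt ℓ b) (petals ℓ c) :=
  fun _ hz ↦ (differentiableAt_flatExt ℓ b
    (re_ne_zero_of_mem_union_neg (fun _ hz ↦ hz.1) hz)).differentiableWithinAt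

theorem flatExt_ofReal (ℓ b : ℝ) {x : ℝ} (hx : x ≠ 0) :
    flatExt ℓ b x = ((b * Real.exp (-1 / |x| ^ ℓ) : ℝ) : ℂ) := by
  have hfold : foldRight (x : ℂ) = ((|x| : ℝ) : ℂ) := by
    rcases hx.lt_or_gt with h | h
    · simp [foldRight, h.not_gt, abs_of_neg h]
    · simp [foldRight, h, abs_of_pos h]
  rw [flatExt, hfold, ← ofReal_cpow (abs_nonneg x), neg_div, one_div,
    ← Real.rpow_neg (abs_nonneg x)]
  push_cast
  rfl

theorem mapsTo_flatExt {ℓ b c : ℝ} (hb : 0 < b) :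
    MapsTo (flatExt ℓ b) (petals ℓ c) (ball 0 (b * Real.exp (-c)) \ {0}) :=
  fun _ hz ↦ mapsTo_const_mul_exp_neg hb c (foldRight_mem (fun _ hz ↦ hz.1) hz).2.2

theorem restrict_flatExt_eq {ℓ b c : ℝ} (hℓ : 1 ≤ ℓ) (hb : 0 < b) (hc : 0 ≤ c) :
    (mapsTo_flatExt (ℓ := ℓ) (c := c) hb).restrict =
      (mapsTo_const_mul_exp_neg hb c).restrict ∘ Prod.fst ∘ petalsHomeomorph hℓ hc :=
  rfl

theorem isCoveringMap_restrict_flatExt {ℓ b c : ℝ} (hℓ : 1 ≤ ℓ) (hb : 0 < b) (hc : 0 ≤ c) :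
    IsCoveringMap (mapsTo_flatExt (ℓ := ℓ) (c := c) hb).restrict := by
  rw [restrict_flatExt_eq hℓ hb hc]
  exact ((isCoveringMap_restrict_const_mul_exp_neg hb c).comp_fst Bool).comp_homeomorph _

theorem surjOn_flatExt {ℓ b c : ℝ} (hℓ : 1 ≤ ℓ) (hb : 0 < b) (hc : 0 ≤ c) :
    SurjOn (flatExt ℓ b) (petals ℓ c) (ball 0 (b * Real.exp (-c)) \ {0}) := by
  rw [← (mapsTo_flatExt hb).restrict_surjective_iff, restrict_flatExt_eq hℓ hb hc]
  exact ((mapsTo_const_mul_exp_neg hb c).restrict_surjective_iff.2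
    (surjOn_const_mul_exp_neg hb c)).comp
    (Prod.fst_surjective.comp (petalsHomeomorph hℓ hc).surjective)

end FlatCovering

open FlatCovering

theorem stmt10 (ℓ b x₀ : ℝ) (hℓ : 1 ≤ ℓ) (hb : 0 < b) (hx₀ : 0 < x₀) :
    ∃ (U : Set ℂ) (F₀ : ℂ → ℂ),
      IsOpen U ∧
      -- `U ⊆ D_*((−x₀, 0)) ∪ D_*((0, x₀))`
      U ⊆ Metric.ball ((-(x₀ / 2) : ℝ) : ℂ) (x₀ / 2) ∪
          Metric.ball (((x₀ / 2) : ℝ) : ℂ) (x₀ / 2) ∧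
      -- `(−x₀, 0) ∪ (0, x₀) ⊆ U`
      (∀ x : ℝ, x ∈ Set.Ioo (-x₀) 0 ∪ Set.Ioo 0 x₀ → (x : ℂ) ∈ U) ∧
      -- `F₀` is holomorphic on `U`
      DifferentiableOn ℂ F₀ U ∧
      -- `F₀` agrees with `f₀(x) = b·exp(−1/|x|^ℓ)` on `(−x₀, 0) ∪ (0, x₀)`
      (∀ x : ℝ, x ∈ Set.Ioo (-x₀) 0 ∪ Set.Ioo 0 x₀ →
        F₀ (x : ℂ) = ((b * Real.exp (-1 / |x| ^ ℓ) : ℝ) : ℂ)) ∧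
      -- `F₀ : U → B*(0, R)` is an (unbranched) covering map onto, `R = b·exp(−1/x₀^ℓ)`
      (∃ hm : Set.MapsTo F₀ U
          (Metric.ball (0 : ℂ) (b * Real.exp (-1 / x₀ ^ ℓ)) \ {0}),
        Set.SurjOn F₀ U (Metric.ball (0 : ℂ) (b * Real.exp (-1 / x₀ ^ ℓ)) \ {0}) ∧
        IsCoveringMap (Set.MapsTo.restrict F₀ U
          (Metric.ball (0 : ℂ) (b * Real.exp (-1 / x₀ ^ ℓ)) \ {0}) hm)) ∧
      -- in particular `diam U = 2x₀`
      Metric.diam U = 2 * x₀ := by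
  have hc : 0 ≤ x₀ ^ (-ℓ) := (Real.rpow_pos_of_pos hx₀ _).le
  have hR : -1 / x₀ ^ ℓ = -x₀ ^ (-ℓ) := by rw [Real.rpow_neg hx₀.le, neg_div, one_div]
  refine ⟨petals ℓ (x₀ ^ (-ℓ)), flatExt ℓ b,
    isOpen_petals _ _, petals_subset_ball_union hℓ hx₀,
    fun x hx ↦ ofReal_mem_petals (by linarith) hx, differentiableOn_flatExt _ _ _,
    fun x hx ↦ flatExt_ofReal _ _ ?_, ?_, diam_petals hℓ hx₀⟩
  · rcases hx with hx | hx
    exacts [hx.2.ne, hx.1.ne']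
  · rw [hR]
    exact ⟨mapsTo_flatExt hb, surjOn_flatExt hℓ hb hc, isCoveringMap_restrict_flatExt hℓ hb hc⟩
end

section
/- For any θ ∈ (0, π) and any t with 0 < t < 1, if z ∈ D_θ then z^t ∈ D_θ. -/
/-!
For `Im z > 0` write `z = exp w` with `0 < Im w < π`. Then `∠0z1 = arg (1 - z⁻¹)`, and along the
path `s ↦ z ^ s = exp (s w)` this angle is `Im log (1 - exp (-s w))`, whose derivative in `s` is
`Im (w / (exp (s w) - 1))`. This is `≤ 0` because `ζ ↦ ζ / (exp ζ - 1)` maps the strip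
`0 < Im ζ < π` into the closed lower half-plane, which in coordinates is the real inequality
`y sin φ + φ cos φ ≤ φ exp y`. So the angle only grows as `s` decreases from `1` to `t`.
The lower half-plane follows by conjugation, and the real points of `D_θ` form `(0, 1)`,
which is stable under `x ↦ x ^ t`.
-/

/-- The unoriented angle `∠aob ∈ [0, π]` at the vertex `o` between the segments
from `o` to `a` and from `o` to `b` (for `a ≠ o ≠ b`). -/
noncomputable def ang (a o b : ℂ) : ℝ := |Complex.arg ((b - o) / (a - o))|

/-- `D_θ = {z ∈ ℂ ∖ {0, 1} : ∠0z1 > π − θ}`. -/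
def Dsec (θ : ℝ) : Set ℂ := {z | z ≠ 0 ∧ z ≠ 1 ∧ Real.pi - θ < ang 0 z 1}

open Complex Set
open scoped Real ComplexConjugate

namespace Real

theorem mul_cos_le_sin {φ : ℝ} (h0 : 0 ≤ φ) (hπ : φ ≤ π) : φ * cos φ ≤ sin φ := by
  rcases le_or_gt (cos φ) 0 with hcos | hcos
  · nlinarith [sin_nonneg_of_nonneg_of_le_pi h0 hπ]
  · have hφ : φ < π / 2 := by
      by_contra! h
      exact hcos.not_ge (cos_nonpos_of_pi_div_two_le_of_le h (by linarith))
    have := le_tan h0 hφ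
    rwa [tan_eq_sin_div_cos, le_div_iff₀ hcos] at this

theorem mul_sin_add_mul_cos_le_mul_exp {φ : ℝ} (h0 : 0 < φ) (hπ : φ < π) (y : ℝ) :
    y * sin φ + φ * cos φ ≤ φ * exp y := by
  have hsin : 0 < sin φ := sin_pos_of_pos_of_lt_pi h0 hπ
  -- the tangent line to `φ * exp` of slope `sin φ`, touching at `y = log (sin φ / φ) ≤ 0`
  set c := sin φ / φ
  have hc : 0 < c := div_pos hsin h0
  have hlog : log c ≤ 0 := log_nonpos hc.le ((div_le_one h0).2 (sin_le h0.le))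
  have htangent : c * (y - log c + 1) ≤ exp y := by
    have := add_one_le_exp (y - log c)
    rwa [exp_sub, exp_log hc, le_div_iff₀ hc, mul_comm] at this
  have hφc : φ * c = sin φ := mul_div_cancel₀ _ h0.ne'
  calc y * sin φ + φ * cos φ ≤ sin φ * (y - log c + 1) := by
        nlinarith [mul_cos_le_sin h0.le hπ.le, mul_nonneg hsin.le (neg_nonneg.2 hlog)]
    _ = φ * (c * (y - log c + 1)) := by rw [← hφc]; ring
    _ ≤ φ * exp y := mul_le_mul_of_nonneg_left htangent h0.le

end Real

namespace Complex

theorem exp_im_pos {ζ : ℂ} (h0 : 0 < ζ.im) (hπ : ζ.im < π) : 0 < (exp ζ).im := by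
  rw [exp_im]
  exact mul_pos (Real.exp_pos _) (Real.sin_pos_of_pos_of_lt_pi h0 hπ)

theorem im_div_exp_sub_one_nonpos {ζ : ℂ} (h0 : 0 < ζ.im) (hπ : ζ.im < π) :
    (ζ / (exp ζ - 1)).im ≤ 0 := by
  rw [div_im, ← sub_div]
  refine div_nonpos_of_nonpos_of_nonneg ?_ (normSq_nonneg _)
  have key := Real.mul_sin_add_mul_cos_le_mul_exp h0 hπ (-ζ.re)
  have hexp : Real.exp ζ.re * Real.exp (-ζ.re) = 1 := by rw [← Real.exp_add]; simp
  simp only [sub_re, sub_im, exp_re, exp_im, one_re, one_im]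
  nlinarith [mul_le_mul_of_nonneg_left key (Real.exp_pos ζ.re).le]

theorem hasDerivAt_log_one_sub_exp_neg_mul {w : ℂ} {s : ℝ} (h0 : 0 < s * w.im)
    (hπ : s * w.im < π) :
    HasDerivAt (fun s : ℝ => log (1 - exp (-(s * w)))) (w / (exp (s * w) - 1)) s := by
  have him : 0 < (exp (s * w)).im := exp_im_pos (by rwa [im_ofReal_mul]) (by rwa [im_ofReal_mul])
  have hne : exp (s * w) - 1 ≠ 0 := fun h => by
    rw [sub_eq_zero] at h; simp [h] at him
  have hslit : 1 - exp (-(s * w)) ∈ slitPlane := by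
    refine mem_slitPlane_iff.2 (Or.inr (ne_of_gt ?_))
    rw [sub_im, one_im, zero_sub, exp_neg, inv_im, neg_div, neg_neg]
    exact div_pos him (normSq_pos.2 (exp_ne_zero _))
  have hlin : HasDerivAt (fun s : ℝ => -((s : ℂ) * w)) (-w) s := by
    simpa using ((hasDerivAt_id s).ofReal_comp.mul_const w).fun_neg
  refine (hlin.cexp.const_sub 1).clog_real hslit |>.congr_deriv ?_
  rw [exp_neg]
  field_simp

theorem antitoneOn_im_log_one_sub_exp_neg_mul {w : ℂ} (hw : 0 < w.im) :
    AntitoneOn (fun s : ℝ => (log (1 - exp (-(s * w)))).im) (Ioo 0 (π / w.im)) := by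
  have hstrip : ∀ s ∈ Ioo 0 (π / w.im), 0 < s * w.im ∧ s * w.im < π := fun s hs =>
    ⟨mul_pos hs.1 hw, (lt_div_iff₀ hw).1 hs.2⟩
  have hderiv : ∀ s ∈ Ioo 0 (π / w.im),
      HasDerivAt (fun s : ℝ => (log (1 - exp (-(s * w)))).im) (w / (exp (s * w) - 1)).im s :=
    fun s hs => imCLM.hasFDerivAt.comp_hasDerivAt s
      (hasDerivAt_log_one_sub_exp_neg_mul (hstrip s hs).1 (hstrip s hs).2)
  refine antitoneOn_of_hasDerivWithinAt_nonpos (convex_Ioo _ _)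
    (fun s hs => (hderiv s hs).continuousAt.continuousWithinAt)
    (fun s hs => (hderiv s (by rwa [interior_Ioo] at hs)).hasDerivWithinAt) fun s hs => ?_
  rw [interior_Ioo] at hs
  have hζ := im_div_exp_sub_one_nonpos (ζ := s * w) (by rw [im_ofReal_mul]; exact (hstrip s hs).1)
    (by rw [im_ofReal_mul]; exact (hstrip s hs).2)
  rw [mul_div_assoc, im_ofReal_mul] at hζ
  exact nonpos_of_mul_nonpos_right hζ hs.1

end Complex

theorem ang_conj (a o b : ℂ) : ang (conj a) (conj o) (conj b) = ang a o b := by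
  unfold ang
  rw [← map_sub, ← map_sub, ← map_div₀, arg_conj]
  split_ifs with h
  · rw [h]
  · rw [abs_neg]

theorem conj_mem_Dsec {θ : ℝ} {z : ℂ} (hz : z ∈ Dsec θ) : conj z ∈ Dsec θ := by
  obtain ⟨h0, h1, hang⟩ := hz
  refine ⟨(map_ne_zero _).2 h0, fun h => h1 ?_, ?_⟩
  · simpa using congrArg conj h
  · rwa [← map_zero conj, ← map_one conj, ang_conj]

theorem ang_zero_one_of_im_pos {z : ℂ} (h : 0 < z.im) : ang 0 z 1 = arg (1 - z⁻¹) := by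
  have hz : z ≠ 0 := fun h0 => by simp [h0] at h
  have him : 0 ≤ (1 - z⁻¹).im := by
    rw [sub_im, one_im, inv_im, zero_sub, neg_div, neg_neg]
    exact div_nonneg h.le (normSq_nonneg z)
  have hquot : (1 - z) / (0 - z) = 1 - z⁻¹ := by field_simp; ring
  rw [ang, hquot, abs_of_nonneg (arg_nonneg_iff.2 him)]

theorem ang_zero_exp_one {ζ : ℂ} (h0 : 0 < ζ.im) (hπ : ζ.im < π) :
    ang 0 (exp ζ) 1 = (log (1 - exp (-ζ))).im := by
  rw [ang_zero_one_of_im_pos (exp_im_pos h0 hπ), log_im, exp_neg]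

-- `ang 0 z 1 = 0` at `z = 0` and `z = 1`, where the quotient in `ang` is `0`.
theorem mem_Dsec_iff {θ : ℝ} (hθπ : θ ≤ π) {z : ℂ} : z ∈ Dsec θ ↔ π - θ < ang 0 z 1 := by
  refine ⟨fun h => h.2.2, fun h => ⟨?_, ?_, h⟩⟩ <;> rintro rfl <;> simp [ang] at h <;> linarith

theorem ang_zero_ofReal_one (x : ℝ) : ang 0 x 1 = if x ∈ Ioo 0 1 then π else 0 := by
  have hcast : ((1 : ℂ) - x) / (0 - x) = ((1 - x) / (0 - x) : ℝ) := by push_cast; ring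
  rw [ang, hcast]
  split_ifs with hx
  · rw [arg_ofReal_of_neg (div_neg_of_pos_of_neg (by linarith [hx.2]) (by linarith [hx.1])),
      abs_of_pos Real.pi_pos]
  · have hnonneg : 0 ≤ (1 - x) / (0 - x) := by
      rcases le_or_gt x 0 with hx0 | hx0
      · exact div_nonneg (by linarith) (by linarith)
      · exact div_nonneg_of_nonpos (by linarith [not_lt.1 fun h => hx ⟨hx0, h⟩]) (by linarith)
    rw [arg_ofReal_of_nonneg hnonneg, abs_zero]

theorem ofReal_mem_Dsec_iff {θ : ℝ} (hθ0 : 0 < θ) (hθπ : θ < π) (x : ℝ) :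
    (x : ℂ) ∈ Dsec θ ↔ x ∈ Ioo 0 1 := by
  rw [mem_Dsec_iff hθπ.le, ang_zero_ofReal_one]
  split_ifs with hx <;> simp only [hx, iff_true, iff_false] <;> linarith

theorem ang_zero_one_le_ang_zero_cpow_one {z : ℂ} (hz : 0 < z.im) {t : ℝ} (ht0 : 0 < t)
    (ht1 : t ≤ 1) : ang 0 z 1 ≤ ang 0 (z ^ (t : ℂ)) 1 := by
  have hz0 : z ≠ 0 := fun h => by simp [h] at hz
  set w := log z
  have hw0 : 0 < w.im := by
    rw [log_im]
    refine (arg_nonneg_iff.2 hz.le).lt_of_ne fun h => ?_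
    exact hz.ne' (arg_eq_zero_iff.1 h.symm).2
  have hwπ : w.im < π := by rw [log_im]; exact arg_lt_pi_iff.2 (Or.inr hz.ne')
  have hmem : ∀ s ∈ Ioc (0 : ℝ) 1, s ∈ Ioo 0 (π / w.im) := fun s hs =>
    ⟨hs.1, (lt_div_iff₀ hw0).2 (by nlinarith [hs.2])⟩
  have hang : ∀ s ∈ Ioc (0 : ℝ) 1, ang 0 (exp (s * w)) 1 = (log (1 - exp (-(s * w)))).im :=
    fun s hs => ang_zero_exp_one (by rw [im_ofReal_mul]; exact mul_pos hs.1 hw0)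
      (by rw [im_ofReal_mul]; nlinarith [hs.1, hs.2])
  have hz1 : z = exp ((1 : ℝ) * w) := by rw [ofReal_one, one_mul, exp_log hz0]
  have hzt : z ^ (t : ℂ) = exp (t * w) := by rw [cpow_def_of_ne_zero hz0, mul_comm]
  rw [hzt, hang t ⟨ht0, ht1⟩, hz1, hang 1 ⟨one_pos, le_rfl⟩]
  exact antitoneOn_im_log_one_sub_exp_neg_mul hw0 (hmem t ⟨ht0, ht1⟩) (hmem 1 ⟨one_pos, le_rfl⟩) ht1

theorem cpow_mem_Dsec_of_im_pos {θ : ℝ} (hθπ : θ ≤ π) {z : ℂ} (hz : 0 < z.im) {t : ℝ}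
    (ht0 : 0 < t) (ht1 : t ≤ 1) (hmem : z ∈ Dsec θ) : z ^ (t : ℂ) ∈ Dsec θ := by
  rw [mem_Dsec_iff hθπ] at hmem ⊢
  exact hmem.trans_le (ang_zero_one_le_ang_zero_cpow_one hz ht0 ht1)

theorem stmt11 (θ t : ℝ) (hθ0 : 0 < θ) (hθπ : θ < Real.pi)
    (ht0 : 0 < t) (ht1 : t < 1)
    (z : ℂ) (hz : z ∈ Dsec θ) :
    z ^ (t : ℂ) ∈ Dsec θ := by
  rcases lt_trichotomy z.im 0 with hneg | hreal | hpos
  · have harg : z.arg ≠ π := fun h => hneg.ne (arg_eq_pi_iff.1 h).2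
    have hconj := cpow_mem_Dsec_of_im_pos hθπ.le (z := conj z) (by simpa using hneg) ht0 ht1.le
      (conj_mem_Dsec hz)
    simpa [conj_cpow _ _ harg] using conj_mem_Dsec hconj
  · obtain ⟨x, rfl⟩ : ∃ x : ℝ, z = x := ⟨z.re, ext rfl hreal⟩
    rw [ofReal_mem_Dsec_iff hθ0 hθπ] at hz
    rw [← ofReal_cpow hz.1.le, ofReal_mem_Dsec_iff hθ0 hθπ]
    exact ⟨Real.rpow_pos_of_pos hz.1 t, Real.rpow_lt_one hz.1.le hz.2 ht0⟩
  · exact cpow_mem_Dsec_of_im_pos hθπ.le hpos ht0 ht1.le hz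
end

section
/- For every ε > 0 there exists δ > 0 such that the following holds: for every θ ∈ (0, π/2], every z ∈ D_θ with ∠01z < δθ, and every t with 0 < t < 1, one has ∠01z^t < εθ. -/
/-!
The triangle with vertices `0`, `1`, `z` has angle sum `π`, so `z ∈ D_θ` forces `|arg z| < θ`
and an obtuse angle at `z`, i.e. `|z|² < Re z`. Write `s = -log |z|`. The point `z^t` has modulus
`e^{-ts}` and argument `t · arg z`, and `x e^{-x} ≤ 1 - e^{-x}` gives
`|arg (1 - z^t)| ≤ |arg z| / s` uniformly in `t`. If `s ≥ 1/ε` this is already `< εθ`.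
Otherwise `|z|` is bounded below by `e^{-1/ε}`. Then the angle `< δθ` at `1`, together with
`Re z > |z|²`, confines `z` to a thin cone at `1` of length `O(s)`. So `|Im z| = O(δθ s)`,
hence `|arg z| = O(δθ s)`, and the bound becomes `O(δθ)`. This suggests `δ = ε e^{-2/ε} / 4`;
capping it at `1/2` keeps the angle at `1` below `π/3`, so that `|1 - z| ≤ 2 Re (1 - z)`.
-/

open Real EuclideanGeometry

lemma Real.abs_le_abs_tan {x : ℝ} (hx : |x| < π / 2) : |x| ≤ |tan x| := by
  rcases abs_cases x with ⟨h, hx0⟩ | ⟨h, hx0⟩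
  · rw [h] at hx ⊢
    exact (le_tan hx0 hx).trans (le_abs_self _)
  · rw [h] at hx ⊢
    rw [← abs_neg, ← tan_neg]
    exact (le_tan (by linarith) hx).trans (le_abs_self _)

lemma Real.mul_exp_neg_le_one_sub_exp_neg (x : ℝ) : x * exp (-x) ≤ 1 - exp (-x) := by
  have h := add_one_le_exp x
  have hinv : exp x * exp (-x) = 1 := by rw [← exp_add, add_neg_cancel, exp_zero]
  nlinarith [exp_pos (-x)]

namespace Complex

lemma abs_arg_le_abs_im_div_re {w : ℂ} (hw : 0 < w.re) : |arg w| ≤ |w.im| / w.re := by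
  have h := Real.abs_le_abs_tan (abs_arg_lt_pi_div_two_iff.2 (Or.inl hw))
  rwa [tan_arg, abs_div, abs_of_pos hw] at h

lemma abs_im_le_two_mul_re_mul_abs_arg {w : ℂ} (hw : |arg w| ≤ π / 3) :
    |w.im| ≤ 2 * w.re * |arg w| := by
  rcases eq_or_ne w 0 with rfl | hw0
  · simp
  have hcos : 1 / 2 ≤ w.re / ‖w‖ := by
    rw [← cos_arg hw0, ← Real.cos_abs, ← cos_pi_div_three]
    exact cos_le_cos_of_nonneg_of_le_pi (abs_nonneg _) (by linarith [pi_pos]) hw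
  have hsin : |w.im| / ‖w‖ ≤ |arg w| := by
    rw [← abs_norm, ← abs_div, ← sin_arg]
    exact abs_sin_le_abs
  have hn : 0 < ‖w‖ := norm_pos_iff.2 hw0
  rw [le_div_iff₀ hn] at hcos
  rw [div_le_iff₀ hn] at hsin
  nlinarith [abs_nonneg (arg w)]

lemma norm_lt_one_of_normSq_lt_re {z : ℂ} (h : normSq z < z.re) : ‖z‖ < 1 := by
  have hr : ‖z‖ ^ 2 < ‖z‖ := by
    rw [Complex.sq_norm]; exact h.trans_le (re_le_norm z)
  nlinarith [norm_nonneg z]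

lemma abs_arg_one_sub_cpow_mul_neg_log_le {z : ℂ} (hz0 : z ≠ 0) (hz1 : ‖z‖ < 1) {t : ℝ}
    (ht : 0 < t) : |arg (1 - z ^ (t : ℂ))| * -Real.log ‖z‖ ≤ |arg z| := by
  set s := -Real.log ‖z‖
  set R := ‖z‖ ^ t
  have hr : 0 < ‖z‖ := norm_pos_iff.2 hz0
  have hs : 0 < s := neg_pos.2 (log_neg hr hz1)
  have hR : R = Real.exp (-(t * s)) := by
    simp only [R, s]; rw [Real.rpow_def_of_pos hr]; ring_nf
  have hR0 : 0 < R := by positivity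
  have hR1 : R < 1 := Real.rpow_lt_one (norm_nonneg z) hz1 ht
  have hre : 1 - R ≤ (1 - z ^ (t : ℂ)).re := by
    rw [sub_re, one_re, cpow_ofReal_re]
    nlinarith [Real.cos_le_one (arg z * t)]
  have him : |(1 - z ^ (t : ℂ)).im| ≤ R * (t * |arg z|) := by
    rw [sub_im, one_im, zero_sub, abs_neg, cpow_ofReal_im, abs_mul, abs_of_pos hR0]
    gcongr
    calc |Real.sin (arg z * t)| ≤ |arg z * t| := abs_sin_le_abs
      _ = t * |arg z| := by rw [abs_mul, abs_of_pos ht, mul_comm]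
  have hkey : R * (t * s) ≤ 1 - R := by
    rw [hR, mul_comm]; exact Real.mul_exp_neg_le_one_sub_exp_neg _
  have harg := abs_arg_le_abs_im_div_re (by linarith : 0 < (1 - z ^ (t : ℂ)).re)
  calc |arg (1 - z ^ (t : ℂ))| * s ≤ R * (t * |arg z|) / (1 - R) * s := by
        gcongr
        exact harg.trans (div_le_div₀ (by positivity) him (by linarith) hre)
    _ = R * (t * s) / (1 - R) * |arg z| := by ring
    _ ≤ |arg z| := by
        apply mul_le_of_le_one_left (abs_nonneg _)
        rwa [div_le_one (by linarith)]

lemma abs_im_le_of_normSq_lt_re {z : ℂ} (hre : normSq z < z.re) (hα : |arg (1 - z)| ≤ π / 3) :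
    |z.im| ≤ 4 * -Real.log ‖z‖ * |arg (1 - z)| := by
  have hz1 := norm_lt_one_of_normSq_lt_re hre
  have hr : 0 < ‖z‖ := norm_pos_iff.2 fun h => by simp [h] at hre
  have hlog : Real.log ‖z‖ ≤ ‖z‖ - 1 := Real.log_le_sub_one_of_pos hr
  have h1 : 1 - z.re ≤ 2 * -Real.log ‖z‖ := by
    rw [← Complex.sq_norm] at hre
    nlinarith
  have h := abs_im_le_two_mul_re_mul_abs_arg hα
  rw [sub_im, one_im, zero_sub, abs_neg, sub_re, one_re] at h
  nlinarith [abs_nonneg (arg (1 - z))]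

lemma abs_arg_one_sub_cpow_lt {ε θ t : ℝ} {z : ℂ} (hε : 0 < ε) (ht : 0 < t)
    (hre : normSq z < z.re) (hφ : |arg z| < θ)
    (hα : |arg (1 - z)| < ε / (4 * Real.exp (2 / ε)) * θ) (hα' : |arg (1 - z)| ≤ π / 3) :
    |arg (1 - z ^ (t : ℂ))| < ε * θ := by
  have hz0 : z ≠ 0 := fun h => by simp [h] at hre
  have hr : 0 < ‖z‖ := norm_pos_iff.2 hz0
  have hz1 := norm_lt_one_of_normSq_lt_re hre
  set s := -Real.log ‖z‖
  have hs : 0 < s := neg_pos.2 (log_neg hr hz1)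
  have hpow := abs_arg_one_sub_cpow_mul_neg_log_le hz0 hz1 ht
  rcases le_or_gt (1 / ε) s with hsε | hsε
  · rw [div_le_iff₀ hε] at hsε
    nlinarith [abs_nonneg (arg (1 - z ^ (t : ℂ)))]
  · have hexp : Real.exp (2 * s) ≤ Real.exp (2 / ε) :=
      Real.exp_le_exp.2 (by linarith [mul_one_div 2 ε])
    have hnorm : 1 ≤ z.re * Real.exp (2 * s) := by
      have : ‖z‖ ^ 2 * Real.exp (2 * s) = 1 := by
        rw [← Real.exp_log hr, ← Real.exp_nat_mul, ← Real.exp_add]; simp [s]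
      rw [← this, Complex.sq_norm]; gcongr
    have hre0 : 0 < z.re := (normSq_nonneg z).trans_lt hre
    have hδ : 4 * |arg (1 - z)| * Real.exp (2 / ε) < ε * θ := by
      rw [div_mul_eq_mul_div, lt_div_iff₀ (by positivity)] at hα; linarith
    have key : |arg (1 - z ^ (t : ℂ))| * s < ε * θ * s := calc
      _ ≤ |arg z| := hpow
      _ ≤ |z.im| / z.re := abs_arg_le_abs_im_div_re hre0
      _ ≤ |z.im| * Real.exp (2 * s) := by
        rw [div_le_iff₀ hre0]
        nlinarith [abs_nonneg z.im]
      _ ≤ 4 * s * |arg (1 - z)| * Real.exp (2 / ε) := by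
        gcongr
        exact abs_im_le_of_normSq_lt_re hre hα'
      _ < ε * θ * s := by nlinarith
    exact lt_of_mul_lt_mul_right key hs.le

end Complex

lemma ang_eq_angle {a o b : ℂ} (ha : a ≠ o) (hb : b ≠ o) : ang a o b = ∠ a o b := by
  rw [ang, EuclideanGeometry.angle, InnerProductGeometry.angle_comm,
    vsub_eq_sub, vsub_eq_sub, Complex.angle_eq_abs_arg (sub_ne_zero.2 hb) (sub_ne_zero.2 ha)]

lemma ang_add_ang_add_ang_eq_pi {a b c : ℂ} (hab : a ≠ b) (hbc : b ≠ c) (hca : c ≠ a) :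
    ang a b c + ang b c a + ang c a b = π := by
  rw [ang_eq_angle hab hbc.symm, ang_eq_angle hbc hca.symm, ang_eq_angle hca hab.symm]
  exact angle_add_angle_add_angle_eq_pi c hab.symm

lemma ang_zero_one (w : ℂ) : ang 0 1 w = |Complex.arg (1 - w)| := by
  rw [ang]; congr 2; ring

lemma ang_one_zero (w : ℂ) : ang 1 0 w = |Complex.arg w| := by
  simp [ang]

lemma abs_arg_lt_of_mem_Dsec {θ : ℝ} {z : ℂ} (hz : z ∈ Dsec θ) : |Complex.arg z| < θ := by
  obtain ⟨hz0, hz1, hang⟩ := hz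
  have h := ang_add_ang_add_ang_eq_pi (a := 0) (b := z) (c := 1) hz0.symm hz1 one_ne_zero
  rw [← ang_one_zero]
  have : 0 ≤ ang z 1 0 := abs_nonneg _
  linarith

lemma normSq_lt_re_of_mem_Dsec {θ : ℝ} {z : ℂ} (hθ : θ ≤ π / 2) (hz : z ∈ Dsec θ) :
    Complex.normSq z < z.re := by
  obtain ⟨hz0, -, hang⟩ := hz
  have hre : ((1 - z) / (0 - z)).re < 0 := by
    rw [← not_le, ← Complex.abs_arg_le_pi_div_two_iff]
    rw [ang] at hang
    linarith
  have hn : 0 < Complex.normSq z := Complex.normSq_pos.2 hz0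
  have : ((1 - z) / (0 - z)).re = 1 - z.re / Complex.normSq z := by
    rw [zero_sub, div_neg, sub_div, div_self hz0, one_div]
    simp [Complex.inv_re]
  rwa [this, sub_neg, one_lt_div hn] at hre

theorem stmt12 (ε : ℝ) (hε : 0 < ε) :
    ∃ δ : ℝ, 0 < δ ∧
      ∀ θ : ℝ, 0 < θ → θ ≤ Real.pi / 2 →
        ∀ z ∈ Dsec θ, ang 0 1 z < δ * θ →
          ∀ t : ℝ, 0 < t → t < 1 → ang 0 1 (z ^ (t : ℂ)) < ε * θ := by
  refine ⟨min (1 / 2) (ε / (4 * exp (2 / ε))), by positivity,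
    fun θ hθ hθπ z hz hα t ht _ => ?_⟩
  rw [ang_zero_one] at hα ⊢
  have hα₁ : |Complex.arg (1 - z)| < ε / (4 * exp (2 / ε)) * θ :=
    hα.trans_le (mul_le_mul_of_nonneg_right (min_le_right _ _) hθ.le)
  have hα₂ : |Complex.arg (1 - z)| ≤ π / 3 := by
    have := mul_le_mul_of_nonneg_right (min_le_left (1 / 2) (ε / (4 * exp (2 / ε)))) hθ.le
    linarith [pi_pos]
  exact Complex.abs_arg_one_sub_cpow_lt hε ht (normSq_lt_re_of_mem_Dsec hθπ hz)
    (abs_arg_lt_of_mem_Dsec hz) hα₁ hα₂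
end

section
/- For every odd integer ℓ ≥ 3, one has 2·R_ℓ·cos(θ_ℓ/ℓ²) > 2^{1/(ℓ−1)} + 2^{1/(ℓ²−ℓ)}. -/
/-!
Write `α = π(ℓ+1)/(2(ℓ³-1))` for the angle in the defining equation and `E = 2ℓ - 1 - 1/ℓ`.
By AM-GM, `R² + R^{2/ℓ} ≥ 2R^{1+1/ℓ}`, so the equation gives
`R^{2ℓ} ≥ 2R^{1+1/ℓ}(1 + cos α) ≥ (4 - α²) R^{1+1/ℓ}`, i.e. `R^E ≥ 4(1 - α²/4)`, whence
`R ≥ 2^{2/E}(1 - α²/4)`. What remains is numerical: convexity of `2^x` bounds the left side by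
`2 + 0.8285 (ℓ+1)/(ℓ²-ℓ)`, while `2 · 2^{2/E} ≥ 2 + (4ℓ/(2ℓ²-ℓ-1)) log 2 + …` wins by about
`0.56/ℓ`, more than the `O(ℓ⁻³)` lost to the two cosines.
-/

open Real

-- `0.8285` exceeds `2 (√2 - 1)`, the slope of the chord of `2 ^ x` over `[0, 1/2]`.
lemma two_rpow_le_one_add_mul {x : ℝ} (hx₀ : 0 ≤ x) (hx : x ≤ 1 / 2) :
    (2 : ℝ) ^ x ≤ 1 + 0.8285 * x := by
  have hsqrt : √2 ≤ 1.41425 := by nlinarith [sq_sqrt (zero_le_two : (0 : ℝ) ≤ 2), sqrt_nonneg 2]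
  have hpow : (2 : ℝ) ^ x = (1 + (√2 - 1)) ^ (2 * x) := by
    rw [add_sub_cancel, sqrt_eq_rpow, ← rpow_mul zero_le_two]
    ring_nf
  rw [hpow]
  calc (1 + (√2 - 1)) ^ (2 * x) ≤ 1 + 2 * x * (√2 - 1) :=
        rpow_one_add_le_one_add_mul_self (by linarith [sqrt_nonneg 2]) (by linarith) (by linarith)
    _ ≤ 1 + 0.8285 * x := by nlinarith

lemma one_add_mul_log_two_add_sq_le_two_rpow {y : ℝ} (hy : 0 ≤ y) :
    1 + y * log 2 + (y * log 2) ^ 2 / 2 ≤ (2 : ℝ) ^ y := by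
  rw [rpow_def_of_pos zero_lt_two, mul_comm (log 2)]
  exact quadratic_le_exp_of_nonneg (mul_nonneg hy (log_nonneg one_le_two))

lemma two_mul_rpow_one_add_le {R : ℝ} (hR : 0 < R) (t : ℝ) :
    2 * R ^ (1 + t) ≤ R ^ 2 + R ^ (2 * t) := by
  rw [rpow_add hR, rpow_one, mul_comm 2 t, rpow_mul hR.le, rpow_two]
  nlinarith [sq_nonneg (R - R ^ t)]

lemma four_sub_sq_le_rpow {R : ℝ} (hR : 0 < R) {ℓ : ℕ} {θ : ℝ}
    (hReq : R ^ (2 * ℓ) = R ^ 2 + R ^ ((2 : ℝ) / ℓ) + 2 * R ^ ((1 : ℝ) + 1 / ℓ) * cos θ) :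
    4 - θ ^ 2 ≤ R ^ (2 * ℓ - (1 + 1 / ℓ : ℝ)) := by
  have hsplit : R ^ (2 * ℓ) = R ^ (2 * ℓ - (1 + 1 / ℓ : ℝ)) * R ^ ((1 : ℝ) + 1 / ℓ) := by
    rw [← rpow_add hR, sub_add_cancel, ← rpow_natCast]
    push_cast
    ring_nf
  have hamgm := two_mul_rpow_one_add_le hR (1 / ℓ)
  rw [mul_one_div] at hamgm
  have hcos := one_sub_sq_div_two_le_cos (x := θ)
  have hpos : 0 < R ^ ((1 : ℝ) + 1 / ℓ) := rpow_pos_of_pos hR _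
  refine le_of_mul_le_mul_right ?_ hpos
  rw [← hsplit, hReq]
  nlinarith

lemma rpow_div_mul_le_of_rpow_mul_le {R E b k u : ℝ} (hR : 0 < R) (hE : 1 ≤ E) (hb : 0 ≤ b)
    (hu₀ : 0 < u) (hu : u ≤ 1) (h : b ^ k * u ≤ R ^ E) : b ^ (k / E) * u ≤ R := by
  have hE₀ : 0 < E := by linarith
  have hu_le : u ≤ u ^ (1 / E) := by
    simpa using rpow_le_rpow_of_exponent_ge hu₀ hu ((div_le_one hE₀).2 hE)
  calc b ^ (k / E) * u ≤ (b ^ k) ^ (1 / E) * u ^ (1 / E) := by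
        rw [← rpow_mul hb, mul_one_div]; gcongr
    _ = (b ^ k * u) ^ (1 / E) := (mul_rpow (rpow_nonneg hb k) hu₀.le).symm
    _ ≤ (R ^ E) ^ (1 / E) := by gcongr
    _ = R := by rw [← rpow_mul hR.le, mul_one_div_cancel hE₀.ne', rpow_one]

lemma two_rpow_add_two_rpow_le {n : ℝ} (hn : 3 ≤ n) :
    (2 : ℝ) ^ (1 / (n - 1)) + (2 : ℝ) ^ (1 / (n ^ 2 - n)) ≤
      2 + 0.8285 * ((n + 1) / (n ^ 2 - n)) := by
  have h₁ : 0 < n - 1 := by linarith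
  have h₂ : 0 < n ^ 2 - n := by nlinarith
  have hsum : 1 / (n - 1) + 1 / (n ^ 2 - n) = (n + 1) / (n ^ 2 - n) := by
    rw [show n ^ 2 - n = n * (n - 1) by ring]
    field_simp
  have hb₁ := two_rpow_le_one_add_mul (x := 1 / (n - 1)) (by positivity)
    (by rw [div_le_div_iff₀ h₁ two_pos]; linarith)
  have hb₂ := two_rpow_le_one_add_mul (x := 1 / (n ^ 2 - n)) (by positivity)
    (by rw [div_le_div_iff₀ h₂ two_pos]; nlinarith)
  linarith

lemma sq_div_four_add_sq_div_two_le {n : ℝ} (hn : 3 ≤ n) :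
    (π * (n + 1) / (2 * (n ^ 3 - 1))) ^ 2 / 4 + (π / (2 * (n ^ 3 - 1))) ^ 2 / 2 ≤
      1 / (2 * n ^ 3) := by
  obtain ⟨t, ht, rfl⟩ : ∃ t ≥ 0, n = 3 + t := ⟨n - 3, by linarith, by ring⟩
  have hπ : π ^ 2 ≤ 9.9225 := by nlinarith [pi_lt_d2, pi_pos]
  have hd : 0 < (3 + t) ^ 3 - 1 := by nlinarith [pow_nonneg ht 2, pow_nonneg ht 3]
  have hsum : (π * (3 + t + 1) / (2 * ((3 + t) ^ 3 - 1))) ^ 2 / 4 +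
      (π / (2 * ((3 + t) ^ 3 - 1))) ^ 2 / 2 =
        π ^ 2 * ((4 + t) ^ 2 + 2) / (16 * ((3 + t) ^ 3 - 1) ^ 2) := by
    field_simp
    ring
  rw [hsum, div_le_div_iff₀ (by positivity) (by positivity)]
  nlinarith [mul_le_mul_of_nonneg_right hπ
      (by positivity : (0 : ℝ) ≤ 2 * (3 + t) ^ 3 * ((4 + t) ^ 2 + 2)),
    pow_nonneg ht 2, pow_nonneg ht 3, pow_nonneg ht 4, pow_nonneg ht 5, pow_nonneg ht 6]

-- `2.7724 = 4 · 0.6931` and `0.4803 < 0.6931²` with `0.6931 < log 2`, and `1.41425 > √2`.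
lemma rational_inequality_of_three_le {n : ℝ} (hn : 3 ≤ n) :
    0.8285 * ((n + 1) / (n ^ 2 - n)) + 1.41425 / n ^ 3 <
      2.7724 * (n / (2 * n ^ 2 - n - 1)) + 0.4803 / n ^ 2 := by
  obtain ⟨t, ht, rfl⟩ : ∃ t ≥ 0, n = 3 + t := ⟨n - 3, by linarith, by ring⟩
  have h₁ : 0 < (3 + t) ^ 2 - (3 + t) := by nlinarith
  have h₂ : 0 < 2 * (3 + t) ^ 2 - (3 + t) - 1 := by nlinarith
  rw [mul_div_assoc', mul_div_assoc', div_add_div _ _ h₁.ne' (by positivity),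
    div_add_div _ _ h₂.ne' (by positivity), div_lt_div_iff₀ (by positivity) (by positivity)]
  nlinarith [pow_nonneg ht 2, pow_nonneg ht 3, pow_nonneg ht 4, pow_nonneg ht 5, pow_nonneg ht 6,
    pow_nonneg ht 7, pow_nonneg ht 8, pow_nonneg ht 9]

lemma two_add_lt_of_sq_le {n θ φ : ℝ} (hn : 3 ≤ n) (hq : θ ^ 2 / 4 + φ ^ 2 / 2 ≤ 1 / (2 * n ^ 3)) :
    2 + 0.8285 * ((n + 1) / (n ^ 2 - n)) <
      2 * ((2 : ℝ) ^ (2 / (2 * n - (1 + 1 / n))) * (1 - θ ^ 2 / 4)) * (1 - φ ^ 2 / 2) := by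
  have hn₀ : 0 < n := by linarith
  have hD : 0 < 2 * n ^ 2 - n - 1 := by nlinarith
  set s := 2 / (2 * n - (1 + 1 / n)) with hs_def
  have hs : s = 2 * n / (2 * n ^ 2 - n - 1) := by
    rw [hs_def, show 2 * n - (1 + 1 / n) = (2 * n ^ 2 - n - 1) / n by field_simp; ring,
      div_div_eq_mul_div]
  have hs₀ : 0 ≤ s := by rw [hs]; positivity
  have hs_half : s ≤ 1 / 2 := by rw [hs, div_le_div_iff₀ hD two_pos]; nlinarith
  have hs_inv : 1 / n ≤ s := by rw [hs, div_le_div_iff₀ hn₀ hD]; nlinarith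
  have hA_le : (2 : ℝ) ^ s ≤ 1.41425 := by linarith [two_rpow_le_one_add_mul hs₀ hs_half]
  have hA_ge := one_add_mul_log_two_add_sq_le_two_rpow hs₀
  have hL : 0.6931 < log 2 := by linarith [log_two_gt_d9]
  have hsL : 0.6931 / n ≤ s * log 2 := by
    rw [div_eq_mul_one_div, mul_comm]
    exact mul_le_mul hs_inv hL.le (by norm_num) hs₀
  have hsL_sq : 0.4803 / n ^ 2 ≤ (s * log 2) ^ 2 := by
    calc 0.4803 / n ^ 2 ≤ (0.6931 / n) ^ 2 := by rw [div_pow]; gcongr; norm_num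
      _ ≤ (s * log 2) ^ 2 := by gcongr
  have hsL_lin : 2.7724 * (n / (2 * n ^ 2 - n - 1)) ≤ 2 * (s * log 2) := by
    rw [hs, mul_div_assoc]
    nlinarith [mul_le_mul_of_nonneg_left hL.le (by positivity : 0 ≤ n / (2 * n ^ 2 - n - 1))]
  have hprod : 1 - 1 / (2 * n ^ 3) ≤ (1 - θ ^ 2 / 4) * (1 - φ ^ 2 / 2) := by
    nlinarith [sq_nonneg (θ * φ)]
  have hcube : (2 : ℝ) ^ s / n ^ 3 ≤ 1.41425 / n ^ 3 := by gcongr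
  calc 2 + 0.8285 * ((n + 1) / (n ^ 2 - n))
      < 2 + 2 * (s * log 2) + (s * log 2) ^ 2 - 1.41425 / n ^ 3 := by
        linarith [rational_inequality_of_three_le hn]
    _ ≤ 2 * (2 : ℝ) ^ s * (1 - 1 / (2 * n ^ 3)) := by
      rw [mul_one_sub, mul_one_div, mul_div_mul_left _ _ two_ne_zero]; linarith
    _ ≤ 2 * ((2 : ℝ) ^ s * (1 - θ ^ 2 / 4)) * (1 - φ ^ 2 / 2) := by
      rw [mul_assoc 2, mul_assoc 2, mul_assoc]; gcongr

theorem stmt15_general (ℓ : ℕ) (h3 : 3 ≤ ℓ) (R : ℝ) (hR : 1 < R)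
    (hReq : R ^ (2 * ℓ) =
      R ^ 2 + R ^ ((2 : ℝ) / (ℓ : ℝ)) +
        2 * R ^ ((1 : ℝ) + 1 / (ℓ : ℝ)) *
          Real.cos (Real.pi * ((ℓ : ℝ) + 1) / (2 * ((ℓ : ℝ) ^ 3 - 1))) ) :
    (2 : ℝ) ^ ((1 : ℝ) / ((ℓ : ℝ) - 1)) + (2 : ℝ) ^ ((1 : ℝ) / ((ℓ : ℝ) ^ 2 - ℓ)) <
      2 * R * Real.cos ((Real.pi * (ℓ : ℝ) ^ 2 / (2 * ((ℓ : ℝ) ^ 3 - 1))) / (ℓ : ℝ) ^ 2) := by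
  have hn : (3 : ℝ) ≤ ℓ := by exact_mod_cast h3
  rw [show π * (ℓ : ℝ) ^ 2 / (2 * ((ℓ : ℝ) ^ 3 - 1)) / (ℓ : ℝ) ^ 2 = π / (2 * ((ℓ : ℝ) ^ 3 - 1)) by
    field_simp]
  set α := π * ((ℓ : ℝ) + 1) / (2 * ((ℓ : ℝ) ^ 3 - 1))
  set φ := π / (2 * ((ℓ : ℝ) ^ 3 - 1))
  have hq : α ^ 2 / 4 + φ ^ 2 / 2 ≤ 1 / (2 * (ℓ : ℝ) ^ 3) := sq_div_four_add_sq_div_two_le hn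
  have hq_small : 1 / (2 * (ℓ : ℝ) ^ 3) < 1 / 2 := by
    rw [div_lt_div_iff₀ (by positivity) two_pos]
    nlinarith [pow_le_pow_left₀ (by norm_num) hn 3]
  have hE : 1 ≤ 2 * (ℓ : ℝ) - (1 + 1 / ℓ) := by
    have : 1 / (ℓ : ℝ) ≤ 1 := by rw [div_le_one (by positivity)]; linarith
    linarith
  have hR_ge : (2 : ℝ) ^ (2 / (2 * (ℓ : ℝ) - (1 + 1 / ℓ))) * (1 - α ^ 2 / 4) ≤ R :=
    rpow_div_mul_le_of_rpow_mul_le (by linarith) hE zero_le_two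
      (by nlinarith [sq_nonneg φ]) (by nlinarith [sq_nonneg α])
      (by rw [rpow_two]; linarith [four_sub_sq_le_rpow (by linarith) hReq])
  calc _ ≤ 2 + 0.8285 * (((ℓ : ℝ) + 1) / ((ℓ : ℝ) ^ 2 - ℓ)) := two_rpow_add_two_rpow_le hn
    _ < 2 * ((2 : ℝ) ^ (2 / (2 * (ℓ : ℝ) - (1 + 1 / ℓ))) * (1 - α ^ 2 / 4)) * (1 - φ ^ 2 / 2) :=
      two_add_lt_of_sq_le hn hq
    _ ≤ 2 * R * (1 - φ ^ 2 / 2) := by gcongr; nlinarith [sq_nonneg α]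
    _ ≤ 2 * R * cos φ := by gcongr; exact one_sub_sq_div_two_le_cos

theorem stmt15 (ℓ : ℕ) (h3 : 3 ≤ ℓ) (hodd : Odd ℓ) (R : ℝ) (hR : 1 < R)
    (hReq : R ^ (2 * ℓ) =
      R ^ 2 + R ^ ((2 : ℝ) / (ℓ : ℝ)) +
        2 * R ^ ((1 : ℝ) + 1 / (ℓ : ℝ)) *
          Real.cos (Real.pi * ((ℓ : ℝ) + 1) / (2 * ((ℓ : ℝ) ^ 3 - 1))) ) :
    (2 : ℝ) ^ ((1 : ℝ) / ((ℓ : ℝ) - 1)) + (2 : ℝ) ^ ((1 : ℝ) / ((ℓ : ℝ) ^ 2 - ℓ)) <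
      2 * R * Real.cos ((Real.pi * (ℓ : ℝ) ^ 2 / (2 * ((ℓ : ℝ) ^ 3 - 1))) / (ℓ : ℝ) ^ 2) :=
  stmt15_general ℓ h3 R hR hReq
end

section
/- For every odd integer ℓ ≥ 3 and R = R_ℓ, one has R^ℓ > R + 1; in particular R^ℓ > 2. -/
/-!
Put `s = R^(1/ℓ)`, so that `R = s^ℓ` and the hypothesis reads
`R^(2ℓ) = R² + s² + 2Rs cos θ`, where `ℓθ ≤ 1`. Since `(R+1)²` is the right-hand side at `s = 1`,
`θ = 0`, it suffices that `s - 1 > θ²/2` (together with `Rs ≤ 2`, from `R^(2ℓ) ≤ 4R²`).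
If instead `s - 1 ≤ θ²/2`, then `R^(2ℓ) = s^(2ℓ²) ≤ exp (ℓ²θ²) ≤ e`, whereas the right-hand side
is at least `2 + 2 cos θ ≥ 4 - θ²`.
-/

open Real

lemma pow_le_exp_mul_sub_one {s : ℝ} (hs : 0 ≤ s) (n : ℕ) : s ^ n ≤ exp (n * (s - 1)) := by
  rw [exp_nat_mul]
  gcongr
  linarith [add_one_le_exp (s - 1)]

lemma sq_le_two_of_pow_two_mul_le {R : ℝ} {n : ℕ} (hR : 1 ≤ R) (hn : 3 ≤ n)
    (h : R ^ (2 * n) ≤ 4 * R ^ 2) : R ^ 2 ≤ 2 := by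
  have h6 : (R ^ 2) ^ 3 ≤ 4 * R ^ 2 :=
    calc (R ^ 2) ^ 3 = R ^ 6 := by ring
      _ ≤ R ^ (2 * n) := pow_le_pow_right₀ hR (by omega)
      _ ≤ 4 * R ^ 2 := h
  have h4 : (R ^ 2) ^ 2 ≤ 2 ^ 2 :=
    le_of_mul_le_mul_left (by linarith : R ^ 2 * (R ^ 2) ^ 2 ≤ R ^ 2 * 2 ^ 2) (by positivity)
  exact (pow_le_pow_iff_left₀ (by positivity) (by norm_num) (by norm_num)).1 h4

lemma four_sub_sq_le_of_eq {R s θ : ℝ} {n : ℕ} (hR : 1 ≤ R) (hs : 1 ≤ s) (hθ : θ ^ 2 ≤ 2)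
    (heq : R ^ n = R ^ 2 + s ^ 2 + 2 * (R * s) * cos θ) : 4 - θ ^ 2 ≤ R ^ n := by
  have hcos : 1 - θ ^ 2 / 2 ≤ cos θ := one_sub_sq_div_two_le_cos
  have hRs : 1 ≤ R * s := one_le_mul_of_one_le_of_one_le hR hs
  nlinarith

lemma mul_le_two_of_eq {R s θ : ℝ} {ℓ : ℕ} (hs : 1 ≤ s) (hℓ : 3 ≤ ℓ) (hsR : s ^ ℓ = R)
    (heq : R ^ (2 * ℓ) = R ^ 2 + s ^ 2 + 2 * (R * s) * cos θ) : R * s ≤ 2 := by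
  have hsle : s ≤ R := hsR ▸ le_self_pow₀ hs (by omega)
  have hR2 : R ^ 2 ≤ 2 := by
    refine sq_le_two_of_pow_two_mul_le (hs.trans hsle) hℓ ?_
    have := cos_le_one θ
    have : 0 ≤ R * s := by nlinarith
    nlinarith
  nlinarith

lemma sq_div_two_lt_sub_one_of_eq {R s θ : ℝ} {ℓ : ℕ} (hs : 1 ≤ s) (hsR : s ^ ℓ = R)
    (hℓθ : (ℓ * θ) ^ 2 ≤ 1) (hθ : θ ^ 2 < 1)
    (heq : R ^ (2 * ℓ) = R ^ 2 + s ^ 2 + 2 * (R * s) * cos θ) : θ ^ 2 / 2 < s - 1 := by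
  by_contra! h
  have hR : 1 ≤ R := hsR ▸ one_le_pow₀ hs
  have hlow := four_sub_sq_le_of_eq hR hs (by linarith) heq
  have hup : R ^ (2 * ℓ) ≤ exp 1 :=
    calc R ^ (2 * ℓ) = s ^ (ℓ * (2 * ℓ)) := by rw [← hsR, ← pow_mul]
      _ ≤ exp ((ℓ * (2 * ℓ) : ℕ) * (s - 1)) := pow_le_exp_mul_sub_one (by linarith) _
      _ ≤ exp 1 := by
        gcongr
        push_cast
        nlinarith [sq_nonneg (ℓ : ℝ)]
  linarith [exp_one_lt_d9]

lemma add_one_sq_lt_of_eq {R s θ : ℝ} {ℓ : ℕ} (hs : 1 ≤ s) (hℓ : 3 ≤ ℓ) (hsR : s ^ ℓ = R)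
    (hℓθ : (ℓ * θ) ^ 2 ≤ 1) (hθ : θ ^ 2 < 1)
    (heq : R ^ (2 * ℓ) = R ^ 2 + s ^ 2 + 2 * (R * s) * cos θ) : (R + 1) ^ 2 < R ^ (2 * ℓ) := by
  have hR : 1 ≤ R := hsR ▸ one_le_pow₀ hs
  have hcos : 1 - θ ^ 2 / 2 ≤ cos θ := one_sub_sq_div_two_le_cos
  have hRs := mul_le_two_of_eq hs hℓ hsR heq
  have key := sq_div_two_lt_sub_one_of_eq hs hsR hℓθ hθ heq
  have hloss : R * s * θ ^ 2 ≤ 2 * θ ^ 2 := by nlinarith [sq_nonneg θ]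
  have hcos' : 2 * (R * s) * (1 - θ ^ 2 / 2) ≤ 2 * (R * s) * cos θ := by gcongr
  nlinarith [mul_nonneg (sub_nonneg.2 hR) (sub_nonneg.2 hs)]

lemma natCast_mul_theta_le_one {ℓ : ℕ} (hℓ : 3 ≤ ℓ) :
    0 < π * ((ℓ : ℝ) + 1) / (2 * ((ℓ : ℝ) ^ 3 - 1)) ∧
      ℓ * (π * ((ℓ : ℝ) + 1) / (2 * ((ℓ : ℝ) ^ 3 - 1))) ≤ 1 := by
  have hℓ' : (3 : ℝ) ≤ ℓ := by exact_mod_cast hℓ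
  have hden : 0 < 2 * ((ℓ : ℝ) ^ 3 - 1) := by
    nlinarith [pow_le_pow_left₀ (by norm_num) hℓ' 3]
  refine ⟨by positivity, ?_⟩
  rw [mul_div_assoc', div_le_one hden]
  nlinarith [pi_lt_four, pi_pos]

theorem stmt16_general (ℓ : ℕ) (h3 : 3 ≤ ℓ) (R : ℝ) (hR : 1 < R)
    (hReq : R ^ (2 * ℓ) =
      R ^ 2 + R ^ ((2 : ℝ) / (ℓ : ℝ)) +
        2 * R ^ ((1 : ℝ) + 1 / (ℓ : ℝ)) *
          Real.cos (Real.pi * ((ℓ : ℝ) + 1) / (2 * ((ℓ : ℝ) ^ 3 - 1))) ) :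
    R + 1 < R ^ ℓ ∧ (2 : ℝ) < R ^ ℓ := by
  set θ := Real.pi * ((ℓ : ℝ) + 1) / (2 * ((ℓ : ℝ) ^ 3 - 1))
  set s := R ^ ((ℓ : ℝ)⁻¹)
  have hR0 : 0 ≤ R := by linarith
  have hsR : s ^ ℓ = R := rpow_inv_natCast_pow hR0 (by omega)
  have hs : 1 ≤ s := (one_lt_rpow hR (by positivity)).le
  have heq : R ^ (2 * ℓ) = R ^ 2 + s ^ 2 + 2 * (R * s) * cos θ := by
    have h2 : R ^ ((2 : ℝ) / ℓ) = s ^ 2 := by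
      rw [← rpow_natCast, ← rpow_mul hR0, div_eq_inv_mul, Nat.cast_ofNat]
    rwa [h2, rpow_add (by linarith), rpow_one, one_div] at hReq
  obtain ⟨hθ0, hℓθ⟩ := natCast_mul_theta_le_one h3
  have hℓθ' : ((ℓ : ℝ) * θ) ^ 2 ≤ 1 := pow_le_one₀ (by positivity) hℓθ
  have hθ : θ ^ 2 < 1 := by
    have : (3 : ℝ) ≤ ℓ := by exact_mod_cast h3
    nlinarith
  have hsq := add_one_sq_lt_of_eq hs h3 hsR hℓθ' hθ heq
  have hlt : R + 1 < R ^ ℓ := lt_of_pow_lt_pow_left₀ 2 (by positivity) (by rwa [← pow_mul, mul_comm])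
  exact ⟨hlt, by linarith⟩

theorem stmt16 (ℓ : ℕ) (h3 : 3 ≤ ℓ) (hodd : Odd ℓ) (R : ℝ) (hR : 1 < R)
    (hReq : R ^ (2 * ℓ) =
      R ^ 2 + R ^ ((2 : ℝ) / (ℓ : ℝ)) +
        2 * R ^ ((1 : ℝ) + 1 / (ℓ : ℝ)) *
          Real.cos (Real.pi * ((ℓ : ℝ) + 1) / (2 * ((ℓ : ℝ) ^ 3 - 1))) ) :
    R + 1 < R ^ ℓ ∧ (2 : ℝ) < R ^ ℓ :=
  stmt16_general ℓ h3 R hR hReq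
end

section
/- There exists R* > 0 such that for every integer d ≥ 2 and every monic centered polynomial g ∈ ℂ[z] of degree d (i.e. g is monic and the coefficient of z^{d−1} vanishes), if every critical value of g lies in the closed disk of radius R* centered at 0 (i.e. |g(z)| ≤ R* whenever g′(z) = 0), then g^{−1}(B(0, 2R*)) ⊆ B(0, R*); that is, every z ∈ ℂ with |g(z)| < 2R* satisfies |z| < R*. -/
/-!
Take `R* = 100`. As `g` is centred, its roots have centroid `0`, so if `‖z‖ ≥ 100` some root `ζ`
satisfies `‖z - ζ‖ ≥ 100`. Since all critical values of `g` are small, a discretised gradient flow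
for `‖g‖²` pushes the segment `[z, ζ]` into the sublevel set `‖g‖ ≤ 101` while fixing `ζ`; hence `z`
and `ζ` lie in a connected set on which `‖g‖ < 200`. On the other hand, Lagrange interpolation at
`d + 1` points of this set placed at equal steps of distance from `z` shows that the monic
polynomial `g` of degree `d` reaches `(‖z - ζ‖ / 6) ^ d ≥ (100 / 6) ^ 2 > 200` on it.
-/

open Polynomial
open scoped Nat ComplexConjugate

section

open Finset

theorem prod_erase_range_abs_sub {d k : ℕ} (hk : k ≤ d) :
    ∏ j ∈ (range (d + 1)).erase k, |(k : ℝ) - j| = k ! * (d - k)! := by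
  have hsplit : (range (d + 1)).erase k = range k ∪ Ico (k + 1) (d + 1) := by
    ext j; simp only [mem_erase, mem_range, mem_union, mem_Ico]; omega
  have hdisj : Disjoint (range k) (Ico (k + 1) (d + 1)) := by
    rw [disjoint_left]; intro j hj hj'; simp only [mem_range, mem_Ico] at hj hj'; omega
  have hleft : ∏ j ∈ range k, |(k : ℝ) - j| = k ! := by
    rw [← Nat.descFactorial_self, Nat.descFactorial_eq_prod_range, Nat.cast_prod]
    refine prod_congr rfl fun j hj => ?_
    have := mem_range.mp hj
    rw [abs_of_pos (by rw [sub_pos]; exact_mod_cast this), Nat.cast_sub this.le]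
  have hright : ∏ j ∈ Ico (k + 1) (d + 1), |(k : ℝ) - j| = (d - k)! := by
    rw [prod_Ico_eq_prod_range, show d + 1 - (k + 1) = d - k by omega,
      ← prod_range_add_one_eq_factorial, Nat.cast_prod]
    refine prod_congr rfl fun j _ => ?_
    rw [abs_sub_comm, abs_of_pos (by push_cast; linarith)]
    push_cast; ring
  rw [hsplit, prod_union hdisj, hleft, hright]

theorem sum_range_inv_factorial_mul_factorial (d : ℕ) :
    ∑ k ∈ range (d + 1), ((k ! * (d - k)! : ℝ))⁻¹ = 2 ^ d / d ! := by
  rw [eq_div_iff (by positivity), sum_mul]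
  have := congrArg (Nat.cast (R := ℝ)) (Nat.sum_range_choose d)
  push_cast at this
  rw [← this]
  refine sum_congr rfl fun k hk => ?_
  rw [Nat.cast_choose ℝ (mem_range_succ_iff.mp hk)]
  field_simp

theorem Polynomial.Monic.exists_le_norm_eval_of_separated {𝕜 : Type*} [NormedField 𝕜]
    {q : 𝕜[X]} (hq : q.Monic) {v : ℕ → 𝕜} {h : ℝ} (hh : 0 < h)
    (hv : ∀ i ≤ q.natDegree, ∀ j ≤ q.natDegree, h * |(i : ℝ) - j| ≤ ‖v i - v j‖) :
    ∃ k ≤ q.natDegree, h ^ q.natDegree * q.natDegree ! / 2 ^ q.natDegree ≤ ‖q.eval (v k)‖ := by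
  set d := q.natDegree
  by_contra! hsmall
  have hinj : Set.InjOn v (range (d + 1)) := by
    intro i hi j hj hij
    have := hv i (mem_range_succ_iff.mp hi) j (mem_range_succ_iff.mp hj)
    rw [hij, sub_self, norm_zero] at this
    have : |(i : ℝ) - j| = 0 := le_antisymm (nonpos_of_mul_nonpos_right this hh) (abs_nonneg _)
    exact_mod_cast sub_eq_zero.mp (abs_eq_zero.mp this)
  have hnodes : ∀ k ∈ range (d + 1),
      h ^ d * (k ! * (d - k)!) ≤ ∏ j ∈ (range (d + 1)).erase k, ‖v k - v j‖ := by
    intro k hk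
    have hk := mem_range_succ_iff.mp hk
    calc h ^ d * (k ! * (d - k)!) = ∏ j ∈ (range (d + 1)).erase k, h * |(k : ℝ) - j| := by
          rw [prod_mul_distrib, prod_const, card_erase_of_mem (mem_range_succ_iff.mpr hk),
            card_range, Nat.succ_sub_one, prod_erase_range_abs_sub hk]
      _ ≤ _ := prod_le_prod (fun j _ => by positivity)
          fun j hj => hv k hk j (mem_range_succ_iff.mp (mem_of_mem_erase hj))
  have hone := Lagrange.leadingCoeff_eq_sum hinj (P := q) (by
    rw [card_range, degree_eq_natDegree hq.ne_zero]; push_cast; rfl)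
  rw [hq.leadingCoeff] at hone
  -- The leading coefficient `1` is a combination of the values at the nodes whose weights are
  -- small because the nodes are `h`-separated.
  refine lt_irrefl (1 : ℝ) ?_
  calc (1 : ℝ)
      = ‖∑ k ∈ range (d + 1), q.eval (v k) / ∏ j ∈ (range (d + 1)).erase k, (v k - v j)‖ := by
        rw [← hone, norm_one]
    _ ≤ ∑ k ∈ range (d + 1), ‖q.eval (v k)‖ / ∏ j ∈ (range (d + 1)).erase k, ‖v k - v j‖ := by
        exact (norm_sum_le _ _).trans_eq (by simp only [norm_div, norm_prod])
    _ < ∑ k ∈ range (d + 1), h ^ d * d ! / 2 ^ d / (h ^ d * (k ! * (d - k)!)) := by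
        refine sum_lt_sum_of_nonempty nonempty_range_add_one fun k hk => ?_
        exact div_lt_div₀ (hsmall k (mem_range_succ_iff.mp hk)) (hnodes k hk) (by positivity)
          (by positivity)
    _ = d ! / 2 ^ d * ∑ k ∈ range (d + 1), ((k ! * (d - k)! : ℝ))⁻¹ := by
        rw [mul_sum]
        exact sum_congr rfl fun k _ => by field_simp
    _ = 1 := by
        rw [sum_range_inv_factorial_mul_factorial]
        field_simp

theorem pow_self_le_three_pow_mul_factorial (d : ℕ) : (d : ℝ) ^ d ≤ 3 ^ d * d ! := by
  have h := Real.pow_div_factorial_le_exp (d : ℝ) d.cast_nonneg d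
  rw [div_le_iff₀ (by positivity), ← mul_one (d : ℝ), Real.exp_nat_mul, mul_one] at h
  exact h.trans (by gcongr; exact Real.exp_one_lt_d9.le.trans (by norm_num))

theorem Polynomial.Monic.exists_le_norm_eval_of_isPreconnected {𝕜 : Type*} [NormedField 𝕜]
    {q : 𝕜[X]} (hq : q.Monic) (hd : 0 < q.natDegree) {P : Set 𝕜} (hP : IsPreconnected P)
    {a b : 𝕜} (ha : a ∈ P) (hb : b ∈ P) :
    ∃ w ∈ P, (‖b - a‖ / 6) ^ q.natDegree ≤ ‖q.eval w‖ := by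
  set d := q.natDegree
  rcases (norm_nonneg (b - a)).eq_or_lt with hL | hL
  · exact ⟨a, ha, by rw [← hL, zero_div, zero_pow hd.ne']; exact norm_nonneg _⟩
  set h := ‖b - a‖ / d
  have hh : 0 < h := by positivity
  have hnode : ∀ k : ℕ, ∃ w ∈ P, k ≤ d → ‖w - a‖ = k * h := by
    intro k
    by_cases hk : k ≤ d
    · have hmem : (k : ℝ) * h ∈ Set.Icc ‖a - a‖ ‖b - a‖ := by
        refine ⟨by rw [sub_self, norm_zero]; positivity, ?_⟩
        calc (k : ℝ) * h ≤ d * h := by gcongr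
          _ = ‖b - a‖ := mul_div_cancel₀ _ (by exact_mod_cast hd.ne')
      obtain ⟨w, hw, hwa⟩ :=
        hP.intermediate_value ha hb (continuous_id.sub continuous_const).norm.continuousOn hmem
      exact ⟨w, hw, fun _ => hwa⟩
    · exact ⟨a, ha, fun hk' => absurd hk' hk⟩
  choose v hvP hv using hnode
  obtain ⟨k, -, hk⟩ := hq.exists_le_norm_eval_of_separated (v := v) hh fun i hi j hj => by
    calc h * |(i : ℝ) - j| = |‖v i - a‖ - ‖v j - a‖| := by
          rw [hv i hi, hv j hj, ← sub_mul, abs_mul, abs_of_pos hh, mul_comm]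
      _ ≤ ‖v i - v j‖ := by simpa using abs_norm_sub_norm_le (v i - a) (v j - a)
  refine ⟨v k, hvP k, le_trans ?_ hk⟩
  have hd' : (0 : ℝ) < d := by exact_mod_cast hd
  rw [div_pow, div_pow, div_mul_eq_mul_div, div_div,
    div_le_div_iff₀ (by positivity) (by positivity),
    show (6 : ℝ) ^ d = 3 ^ d * 2 ^ d by rw [← mul_pow]; norm_num]
  have := pow_self_le_three_pow_mul_factorial d
  calc ‖b - a‖ ^ d * (d ^ d * 2 ^ d) ≤ ‖b - a‖ ^ d * ((3 ^ d * d !) * 2 ^ d) := by gcongr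
    _ = _ := by ring

end

structure IsDescentMap {E : Type*} [AddCommGroup E] [Module ℝ E] (V : E → ℝ) (F : E → E)
    (T S μ : ℝ) : Prop where
  le_of_mem_segment : ∀ w, V w ≤ T → ∀ y ∈ segment ℝ w (F w), V y ≤ V w
  le_sub : ∀ w, V w ≤ T → S ≤ V w → V (F w) ≤ V w - μ

namespace IsDescentMap

variable {E : Type*} [AddCommGroup E] [Module ℝ E] {V : E → ℝ} {F : E → E} {T S μ : ℝ}

theorem iterate_le (hF : IsDescentMap V F T S μ) {w : E} (hw : V w ≤ T) (n : ℕ) :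
    V (F^[n] w) ≤ V w := by
  induction n with
  | zero => rfl
  | succ n ih =>
    rw [Function.iterate_succ_apply']
    exact (hF.le_of_mem_segment _ (ih.trans hw) _ (right_mem_segment ℝ _ _)).trans ih

theorem iterate_le_max (hF : IsDescentMap V F T S μ) {w : E} (hw : V w ≤ T) (n : ℕ) :
    V (F^[n] w) ≤ max S (T - n * μ) := by
  induction n with
  | zero => simpa using Or.inr hw
  | succ n ih =>
    set u := F^[n] w
    have hu : V u ≤ T := (hF.iterate_le hw n).trans hw
    have hFu : V (F u) ≤ V u := hF.le_of_mem_segment u hu _ (right_mem_segment ℝ _ _)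
    rw [Function.iterate_succ_apply']
    rcases le_or_gt (V u) S with huS | huS
    · exact le_max_of_le_left (hFu.trans huS)
    · have := hF.le_sub u hu huS.le
      have := (le_max_iff.mp ih).resolve_left huS.not_ge
      exact le_max_of_le_right (by push_cast; linarith)

theorem exists_iterate_le (hF : IsDescentMap V F T S μ) (hμ : 0 < μ) :
    ∃ N : ℕ, ∀ w, V w ≤ T → V (F^[N] w) ≤ S := by
  refine ⟨⌈(T - S) / μ⌉₊, fun w hw => (hF.iterate_le_max hw _).trans (max_le le_rfl ?_)⟩
  have := (div_le_iff₀ hμ).mp (Nat.le_ceil ((T - S) / μ))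
  linarith

variable [TopologicalSpace E] [ContinuousAdd E] [ContinuousSMul ℝ E]

theorem exists_isPreconnected_iterate (hF : IsDescentMap V F T S μ) {w : E} (hw : V w ≤ T)
    (n : ℕ) : ∃ Q : Set E, IsPreconnected Q ∧ w ∈ Q ∧ F^[n] w ∈ Q ∧ ∀ y ∈ Q, V y ≤ V w := by
  induction n with
  | zero => exact ⟨{w}, isPreconnected_singleton, rfl, rfl, fun y hy => hy ▸ le_rfl⟩
  | succ n ih =>
    obtain ⟨Q, hQ, hwQ, hnQ, hQle⟩ := ih
    set u := F^[n] w
    have hu : V u ≤ V w := hF.iterate_le hw n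
    refine ⟨Q ∪ segment ℝ u (F u), hQ.union u hnQ (left_mem_segment ℝ _ _)
      (convex_segment _ _).isPreconnected, Or.inl hwQ, ?_, ?_⟩
    · rw [Function.iterate_succ_apply']
      exact Or.inr (right_mem_segment ℝ _ _)
    · rintro y (hy | hy)
      exacts [hQle y hy, (hF.le_of_mem_segment u (hu.trans hw) y hy).trans hu]

/-- A high iterate `F^[N]` maps the segment `[a, b]` onto a connected set below level `S` that
contains `b = F^[N] b`; the broken line `a, F a, …, F^[N] a` joins `a` to it. -/
theorem exists_isPreconnected (hF : IsDescentMap V F T S μ) (hFc : Continuous F) (hμ : 0 < μ)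
    {a b : E} (hab : ∀ y ∈ segment ℝ a b, V y ≤ T) (hb : F b = b) :
    ∃ P : Set E, IsPreconnected P ∧ a ∈ P ∧ b ∈ P ∧ ∀ y ∈ P, V y ≤ max (V a) S := by
  obtain ⟨N, hN⟩ := hF.exists_iterate_le hμ
  obtain ⟨Q, hQ, haQ, hNQ, hQle⟩ :=
    hF.exists_isPreconnected_iterate (hab a (left_mem_segment ℝ a b)) N
  refine ⟨Q ∪ F^[N] '' segment ℝ a b,
    hQ.union _ hNQ (Set.mem_image_of_mem _ (left_mem_segment ℝ a b))
      ((convex_segment a b).isPreconnected.image _ (hFc.iterate N).continuousOn), Or.inl haQ,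
    Or.inr ⟨b, right_mem_segment ℝ a b, Function.iterate_fixed hb N⟩, ?_⟩
  rintro y (hy | ⟨x, hx, rfl⟩)
  exacts [le_max_of_le_left (hQle y hy), le_max_of_le_right (hN x (hab x hx))]

end IsDescentMap

open Set Metric

namespace Polynomial

variable {𝕜 : Type*} [RCLike 𝕜]

theorem norm_eval_sub_sub_le (g : 𝕜[X]) {w z : 𝕜} {M : ℝ}
    (hM : ∀ y ∈ segment ℝ w z, ‖g.derivative.derivative.eval y‖ ≤ M) :
    ‖g.eval z - g.eval w - g.derivative.eval w * (z - w)‖ ≤ M * ‖z - w‖ ^ 2 := by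
  have hM0 : 0 ≤ M := (norm_nonneg _).trans (hM w (left_mem_segment ℝ w z))
  have hlip : ∀ y ∈ segment ℝ w z,
      ‖g.derivative.eval y - g.derivative.eval w‖ ≤ M * ‖z - w‖ := fun y hy =>
    calc _ ≤ M * ‖y - w‖ := (convex_segment w z).norm_image_sub_le_of_norm_hasDerivWithin_le
          (fun x _ => (g.derivative.hasDerivAt x).hasDerivWithinAt) hM
          (left_mem_segment ℝ w z) hy
      _ ≤ M * ‖z - w‖ := by gcongr; exact norm_sub_le_of_mem_segment hy
  have := (convex_segment w z).norm_image_sub_le_of_norm_hasDerivWithin_le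
    (f := fun y => g.eval y - g.derivative.eval w * y)
    (fun x _ => ((g.hasDerivAt x).sub ((hasDerivAt_id x).const_mul _)).hasDerivWithinAt)
    (by simpa using hlip) (left_mem_segment ℝ w z) (right_mem_segment ℝ w z)
  calc _ = ‖(g.eval z - g.derivative.eval w * z) - (g.eval w - g.derivative.eval w * w)‖ := by
        ring_nf
    _ ≤ M * ‖z - w‖ * ‖z - w‖ := this
    _ = M * ‖z - w‖ ^ 2 := by ring

-- `w - t g(w) conj (g'(w))` is a gradient-descent step for `‖g‖²`.
theorem norm_eval_sub_mul_conj_le (g : 𝕜[X]) {w : 𝕜} {t M : ℝ} (ht : 0 ≤ t)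
    (hM : ∀ y ∈ closedBall w 1, ‖g.derivative.derivative.eval y‖ ≤ M)
    (h₁ : t * (‖g.eval w‖ * ‖g.derivative.eval w‖) ≤ 1) (h₂ : t * ‖g.derivative.eval w‖ ^ 2 ≤ 1)
    (h₃ : 2 * M * t * ‖g.eval w‖ ≤ 1) :
    ‖g.eval (w - t * (g.eval w * conj (g.derivative.eval w)))‖
      ≤ ‖g.eval w‖ * (1 - t * ‖g.derivative.eval w‖ ^ 2 / 2) := by
  set A := ‖g.eval w‖
  set B := ‖g.derivative.eval w‖
  set z := w - t * (g.eval w * conj (g.derivative.eval w))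
  have hzw : ‖z - w‖ = t * (A * B) := by
    simp only [z, sub_sub_cancel_left, norm_neg, norm_mul, RCLike.norm_ofReal, abs_of_nonneg ht,
      RCLike.norm_conj, A, B]
  have hseg : ∀ y ∈ segment ℝ w z, y ∈ closedBall w 1 := fun y hy => by
    rw [mem_closedBall, dist_eq_norm]
    exact (norm_sub_le_of_mem_segment hy).trans (hzw ▸ h₁)
  have hlin : g.eval w + g.derivative.eval w * (z - w) = g.eval w * ((1 - t * B ^ 2 : ℝ) : 𝕜) := by
    have := RCLike.mul_conj (g.derivative.eval w)
    simp only [z]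
    push_cast
    linear_combination (-(t : 𝕜) * g.eval w) * this
  have hA : 0 ≤ A := norm_nonneg _
  have hM0 : 0 ≤ M := (norm_nonneg _).trans (hM w (mem_closedBall_self zero_le_one))
  calc ‖g.eval z‖
      = ‖(g.eval w + g.derivative.eval w * (z - w))
        + (g.eval z - g.eval w - g.derivative.eval w * (z - w))‖ := by ring_nf
    _ ≤ ‖g.eval w + g.derivative.eval w * (z - w)‖
        + ‖g.eval z - g.eval w - g.derivative.eval w * (z - w)‖ := norm_add_le _ _
    _ ≤ A * (1 - t * B ^ 2) + M * (t * (A * B)) ^ 2 := by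
        gcongr
        · rw [hlin, norm_mul, RCLike.norm_ofReal, abs_of_nonneg (by linarith)]
        · exact hzw ▸ g.norm_eval_sub_sub_le fun y hy => hM y (hseg y hy)
    _ ≤ A * (1 - t * B ^ 2 / 2) := by
        have : 0 ≤ t * B ^ 2 * A := by positivity
        nlinarith

theorem exists_pos_forall_norm_eval_sub_mul_conj_le {g : 𝕜[X]} (hg : 0 < g.degree) (T : ℝ) :
    ∃ c : ℝ, 0 < c ∧ ∀ w, ‖g.eval w‖ ≤ T → ∀ t ∈ Icc 0 c,
      ‖g.eval (w - (t : 𝕜) * (g.eval w * conj (g.derivative.eval w)))‖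
        ≤ ‖g.eval w‖ * (1 - t * ‖g.derivative.eval w‖ ^ 2 / 2) := by
  set K := (fun z => g.eval z) ⁻¹' closedBall 0 T
  have hK : IsCompact K := (g.isProperMap_eval hg).isCompact_preimage (isCompact_closedBall 0 T)
  obtain ⟨M₂, hM₂⟩ := hK.cthickening (r := 1).exists_bound_of_continuousOn
    g.derivative.derivative.continuous.continuousOn
  obtain ⟨M₃, hM₃⟩ := hK.exists_bound_of_continuousOn g.derivative.continuous.continuousOn
  set c := (1 + |T * M₃| + M₃ ^ 2 + |2 * M₂ * T|)⁻¹
  have hcle : ∀ x ≤ 1 + |T * M₃| + M₃ ^ 2 + |2 * M₂ * T|, c * x ≤ 1 :=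
    fun x hx => inv_mul_le_one_of_le₀ hx (by positivity)
  refine ⟨c, by positivity, fun w hA t ⟨ht0, htc⟩ => ?_⟩
  have hw : w ∈ K := mem_closedBall_zero_iff.mpr hA
  have hB := hM₃ w hw
  have hAB : ‖g.eval w‖ * ‖g.derivative.eval w‖ ≤ T * M₃ :=
    mul_le_mul hA hB (norm_nonneg _) ((norm_nonneg _).trans hA)
  refine g.norm_eval_sub_mul_conj_le ht0
    (fun y hy => hM₂ y (closedBall_subset_cthickening hw 1 hy)) ?_ ?_ ?_
  · exact (mul_le_mul_of_nonneg_right htc (by positivity)).trans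
      (hcle _ (by linarith [le_abs_self (T * M₃), sq_nonneg M₃, abs_nonneg (2 * M₂ * T)]))
  · refine (mul_le_mul_of_nonneg_right htc (by positivity)).trans (hcle _ ?_)
    have : ‖g.derivative.eval w‖ ^ 2 ≤ M₃ ^ 2 := pow_le_pow_left₀ (norm_nonneg _) hB 2
    linarith [abs_nonneg (T * M₃), abs_nonneg (2 * M₂ * T)]
  · have hM₂0 : 0 ≤ M₂ := (norm_nonneg _).trans (hM₂ w (self_subset_cthickening K hw))
    calc 2 * M₂ * t * ‖g.eval w‖ = 2 * M₂ * (t * ‖g.eval w‖) := by ring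
      _ ≤ 2 * M₂ * (c * T) := by gcongr
      _ = c * (2 * M₂ * T) := by ring
      _ ≤ 1 := hcle _ (by linarith [le_abs_self (2 * M₂ * T), abs_nonneg (T * M₃), sq_nonneg M₃])

theorem exists_isDescentMap {g : 𝕜[X]} (hg : 0 < g.degree) {S S' : ℝ} (hSS' : S < S')
    (hS' : 0 < S') (hcrit : ∀ z, g.derivative.eval z = 0 → ‖g.eval z‖ ≤ S) (T : ℝ) :
    ∃ F : 𝕜 → 𝕜, Continuous F ∧ (∀ b, g.eval b = 0 → F b = b) ∧
      ∃ μ > 0, IsDescentMap (fun z => ‖g.eval z‖) F T S' μ := by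
  obtain ⟨c, hc, hstep⟩ := exists_pos_forall_norm_eval_sub_mul_conj_le hg T
  have hK :=
    ((g.isProperMap_eval hg).isCompact_preimage (isCompact_closedBall 0 T)).inter_right
      (isClosed_le (continuous_const (y := S')) g.continuous.norm)
  obtain ⟨m, hm0, hm⟩ := hK.exists_forall_le' g.derivative.continuous.norm.continuousOn (a := 0)
    fun z hz => norm_pos_iff.mpr fun h0 => (hcrit z h0).not_gt (hSS'.trans_le hz.2)
  refine ⟨fun z => z - c * (g.eval z * conj (g.derivative.eval z)),
    continuous_id.sub (continuous_const.mul (g.continuous.mul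
      (RCLike.continuous_conj.comp g.derivative.continuous))),
    fun b hb => by simp [hb], c * S' * m ^ 2 / 2, by positivity, ⟨?_, ?_⟩⟩
  · intro w hw y hy
    rw [segment_eq_image'] at hy
    obtain ⟨s, ⟨hs0, hs1⟩, rfl⟩ := hy
    have := hstep w hw (s * c) ⟨by positivity, mul_le_of_le_one_left hc.le hs1⟩
    have hy : w + s • (w - c * (g.eval w * conj (g.derivative.eval w)) - w)
        = w - (s * c : ℝ) * (g.eval w * conj (g.derivative.eval w)) := by
      rw [RCLike.real_smul_eq_coe_mul]; push_cast; ring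
    refine (hy ▸ this).trans (mul_le_of_le_one_right (norm_nonneg _) ?_)
    linarith [show 0 ≤ s * c * ‖g.derivative.eval w‖ ^ 2 by positivity]
  · intro w hw hS'w
    have := hstep w hw c ⟨hc.le, le_rfl⟩
    have hm2 : m ^ 2 ≤ ‖g.derivative.eval w‖ ^ 2 :=
      pow_le_pow_left₀ hm0.le (hm w ⟨mem_closedBall_zero_iff.mpr hw, hS'w⟩) 2
    have : c * S' * m ^ 2 ≤ c * ‖g.eval w‖ * ‖g.derivative.eval w‖ ^ 2 := by gcongr
    nlinarith

theorem exists_isPreconnected_norm_eval_le {g : 𝕜[X]} (hg : 0 < g.degree) {S S' : ℝ}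
    (hSS' : S < S') (hS' : 0 < S') (hcrit : ∀ z, g.derivative.eval z = 0 → ‖g.eval z‖ ≤ S)
    (a : 𝕜) {b : 𝕜} (hb : g.eval b = 0) :
    ∃ P : Set 𝕜, IsPreconnected P ∧ a ∈ P ∧ b ∈ P ∧ ∀ z ∈ P, ‖g.eval z‖ ≤ max ‖g.eval a‖ S' := by
  obtain ⟨T, hT⟩ := (isCompact_closedBall a ‖b - a‖).exists_bound_of_continuousOn
    g.continuous.continuousOn
  obtain ⟨F, hFc, hFb, μ, hμ, hF⟩ := exists_isDescentMap hg hSS' hS' hcrit T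
  exact hF.exists_isPreconnected hFc hμ
    (fun y hy => hT y (mem_closedBall_iff_norm.mpr (norm_sub_le_of_mem_segment hy))) (hFb b hb)

end Polynomial

theorem Multiset.exists_mem_norm_le_norm_sub {E : Type*} [NormedAddCommGroup E] [NormedSpace ℝ E]
    {s : Multiset E} (hs : s ≠ 0) (hsum : s.sum = 0) (z : E) : ∃ ζ ∈ s, ‖z‖ ≤ ‖z - ζ‖ := by
  by_contra! h
  refine lt_irrefl ((card s : ℝ) * ‖z‖) ?_
  calc (card s : ℝ) * ‖z‖ = ‖(s.map (fun ζ => z - ζ)).sum‖ := by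
        rw [sum_map_sub, map_const', sum_replicate, map_id', hsum, sub_zero, RCLike.norm_nsmul ℝ,
          nsmul_eq_mul]
    _ ≤ (s.map (fun ζ => ‖z - ζ‖)).sum := by
        simpa only [map_map, Function.comp_def] using norm_multiset_sum_le (s.map (fun ζ => z - ζ))
    _ < (s.map (fun _ => ‖z‖)).sum := sum_lt_sum_of_nonempty hs h
    _ = card s * ‖z‖ := by rw [map_const', sum_replicate, nsmul_eq_mul]

theorem stmt19 :
    ∃ Rstar : ℝ, 0 < Rstar ∧
      ∀ d : ℕ, 2 ≤ d → ∀ g : Polynomial ℂ,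
        g.Monic → g.natDegree = d → g.coeff (d - 1) = 0 →
        (∀ z : ℂ, (Polynomial.derivative g).eval z = 0 →
          ‖g.eval z‖ ≤ Rstar) →
        ∀ z : ℂ, ‖g.eval z‖ < 2 * Rstar → ‖z‖ < Rstar := by
  refine ⟨100, by norm_num, fun d hd g hg hdeg hcoeff hcrit z hz => ?_⟩
  by_contra! hzR
  have hd0 : 0 < g.natDegree := by omega
  obtain ⟨ζ, hζ, hzζ⟩ := Multiset.exists_mem_norm_le_norm_sub
    (by rw [← Multiset.card_pos, IsAlgClosed.card_roots_eq_natDegree]; exact hd0)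
    (by rw [← neg_eq_zero, ← (IsAlgClosed.splits g).nextCoeff_eq_neg_sum_roots_of_monic hg,
      nextCoeff_of_natDegree_pos hd0, hdeg, hcoeff]) z
  obtain ⟨P, hP, hzP, hζP, hPle⟩ := exists_isPreconnected_norm_eval_le
    (natDegree_pos_iff_degree_pos.mp hd0) (by norm_num : (100 : ℝ) < 101) (by norm_num) hcrit z
    (isRoot_of_mem_roots hζ)
  obtain ⟨w, hwP, hw⟩ := hg.exists_le_norm_eval_of_isPreconnected hd0 hP hζP hzP
  have hsmall : ‖g.eval w‖ < 200 := (hPle w hwP).trans_lt (max_lt (by linarith) (by norm_num))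
  have hlarge : 200 < ‖g.eval w‖ := calc
    (200 : ℝ) < (100 / 6) ^ 2 := by norm_num
    _ ≤ (100 / 6) ^ g.natDegree := pow_le_pow_right₀ (by norm_num) (hdeg ▸ hd)
    _ ≤ (‖z - ζ‖ / 6) ^ g.natDegree := by gcongr; linarith
    _ ≤ ‖g.eval w‖ := hw
  linarith
end
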